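/- arXiv:2302.06105 — 11 statements merged into one kernel-verified Lean document; each statement's English description precedes it below -/
import Mathlib

section
/- Let n ≥ 3, p = ⌊(n−1)/2⌋, and let Q be a real linear subspace of the space of n×n real symmetric matrices such that every element of Q is austere. Suppose Q contains a matrix A with tr(A²) = 1 such that the matrices I_n, A², A⁴, …, A^{2p} are ℝ-linearly independent (i.e. Q ∩ B_{n,ℝ} ≠ ∅). Then dim Q ≤ p² + 2p if n = 2p+1, and dim Q ≤ p² + 3p + 2 if n = 2p+2. -/
/-!
Diagonalize the given `A ∈ Q` as `Uᵀ A U = diag μ`. Since the odd power sums of `μ` vanish up to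
degree `2p + 1 ≥ n - 1`, Newton's identities make the characteristic polynomial even, so
`μ ∘ σ = -μ` for a permutation `σ`. Independence of `I, A², …, A^{2p}` says that `μ²` takes at
least `p + 1` values; together with the symmetry this forces all nonzero eigenvalues to be simple
and leaves at most two zero eigenvalues.

Polarizing `tr X³ = 0` on `Q` gives `tr (A B²) = 0`, i.e. `∑ (μ_a + μ_b) B'_{ab}² = 0` for
`B' = Uᵀ B U`. So if the entries of `B'` at the pairs `{a, b}` with `μ_a + μ_b > 0` vanish, all
entries with `μ_a + μ_b ≠ 0` vanish: `B ↦ B'` restricted to the pairs with `μ_a + μ_b ≥ 0` is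
injective on `Q`, and since `tr B' = 0` one diagonal entry at a zero eigenvalue may be dropped.
By the symmetry `σ`, the pairs with positive and with negative sum are equinumerous, and the
zero-sum pairs are counted from the simplicity of the nonzero eigenvalues.
-/

open Polynomial Finset Matrix

section OddPowerSums
variable {ι K : Type*} [Fintype ι] [Field K] [CharZero K]

theorem esymm_eq_zero_of_odd_psum_eq_zero (μ : ι → K) {p : ℕ}
    (hps : ∀ k ≤ p, ∑ a, μ a ^ (2 * k + 1) = 0) {j : ℕ} (hj : j ≤ 2 * p + 2) (hodd : Odd j) :
    (univ.val.map μ).esymm j = 0 := by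
  induction j using Nat.strong_induction_on with
  | _ j ih =>
  have hnewton := congrArg (MvPolynomial.aeval μ) (MvPolynomial.mul_esymm_eq_sum ι K j)
  simp only [map_mul, map_sum, map_pow, map_neg, map_one, map_natCast,
    MvPolynomial.aeval_esymm_eq_multiset_esymm, MvPolynomial.psum, MvPolynomial.aeval_X]
    at hnewton
  -- In each term `e_i p_k` of Newton's identity with `i + k = j` odd, `i` or `k` is odd.
  rw [Finset.sum_eq_zero, mul_zero, mul_eq_zero] at hnewton
  · exact hnewton.resolve_left (by exact_mod_cast hodd.pos.ne')
  rintro ⟨i, k⟩ hik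
  simp only [mem_filter, HasAntidiagonal.mem_antidiagonal] at hik
  obtain ⟨hsum, hlt⟩ := hik
  rcases Nat.even_or_odd k with hk | ⟨l, rfl⟩
  · rw [ih i hlt (by omega) (Nat.odd_add.mp (hsum ▸ hodd) |>.mpr hk), mul_zero, zero_mul]
  · rw [hps l (by omega), mul_zero]

theorem map_neg_eq_of_odd_psum_eq_zero (μ : ι → K) {p : ℕ}
    (hcard : Fintype.card ι ≤ 2 * p + 2) (hps : ∀ k ≤ p, ∑ a, μ a ^ (2 * k + 1) = 0) :
    (univ.val.map μ).map Neg.neg = univ.val.map μ := by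
  have hprod : (((univ.val.map μ).map Neg.neg).map (X - C ·)).prod =
      ((univ.val.map μ).map (X - C ·)).prod := by
    rw [Multiset.prod_X_sub_X_eq_sum_esymm, Multiset.prod_X_sub_X_eq_sum_esymm,
      Multiset.card_map]
    refine sum_congr rfl fun j hj => ?_
    suffices ((univ.val.map μ).map Neg.neg).esymm j = (univ.val.map μ).esymm j by rw [this]
    rw [Multiset.esymm_neg]
    rcases Nat.even_or_odd j with he | ho
    · rw [he.neg_one_pow, one_mul]
    · rw [esymm_eq_zero_of_odd_psum_eq_zero μ hps ?_ ho, mul_zero]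
      exact (mem_range_succ_iff.mp hj).trans (by simpa using hcard)
  simpa only [roots_multiset_prod_X_sub_C] using congrArg roots hprod

end OddPowerSums

theorem exists_perm_apply_eq_of_map_eq {ι β : Type*} [Fintype ι] [DecidableEq β] {f g : ι → β}
    (h : univ.val.map f = univ.val.map g) : ∃ σ : Equiv.Perm ι, ∀ a, f (σ a) = g a := by
  refine ⟨Equiv.ofFiberEquiv fun c => Fintype.equivOfCardEq ?_, Equiv.ofFiberEquiv_map _⟩
  have := congrArg (Multiset.count c) h
  simp only [Multiset.count_map, eq_comm (a := c)] at this
  simpa only [Fintype.card_subtype, Finset.card, Finset.filter_val] using this.symm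

theorem le_card_image_of_linearIndependent_pow {ι K : Type*} [Fintype ι] [Field K]
    [DecidableEq K] (f : ι → K) {m : ℕ}
    (h : LinearIndependent K fun j : Fin m => fun a => f a ^ (j : ℕ)) :
    m ≤ #(univ.image f) := by
  have hrestrict : LinearIndependent K fun j : Fin m => fun x : univ.image f => (x : K) ^ (j : ℕ) :=
    LinearIndependent.of_comp
      (LinearMap.funLeft K K fun a => ⟨f a, mem_image_of_mem f (mem_univ a)⟩) h
  simpa using hrestrict.fintype_card_le_finrank

def pairSum {ι : Type*} (μ : ι → ℝ) : Sym2 ι → ℝ :=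
  Sym2.lift ⟨fun a b => μ a + μ b, fun _ _ => add_comm _ _⟩

@[simp] theorem pairSum_mk {ι : Type*} (μ : ι → ℝ) (a b : ι) : pairSum μ s(a, b) = μ a + μ b :=
  rfl

section SymmetricSpectrum
variable {ι : Type*} [Fintype ι] {μ : ι → ℝ} {σ : Equiv.Perm ι}

omit [Fintype ι] in
theorem apply_symm_eq_neg (hσ : ∀ a, μ (σ a) = -μ a) (a : ι) : μ (σ.symm a) = -μ a := by
  linarith [hσ (σ.symm a), congrArg μ (σ.apply_symm_apply a)]

theorem card_neg_eq_card_pos (hσ : ∀ a, μ (σ a) = -μ a) : #{a | μ a < 0} = #{a | 0 < μ a} :=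
  card_equiv σ fun a => by simp [hσ]

theorem card_eq_two_mul_card_pos_add_card_zero (hσ : ∀ a, μ (σ a) = -μ a) :
    Fintype.card ι = 2 * #{a | 0 < μ a} + #{a | μ a = 0} := by
  classical
  have hzero := card_filter_add_card_filter_not (s := univ) (fun a => μ a = 0)
  have hnonzero : #{a | ¬μ a = 0} = #{a | μ a < 0} + #{a | 0 < μ a} := by
    rw [← card_union_of_disjoint (disjoint_filter.mpr fun a _ h h' => (h.trans h').false),
      ← filter_or]
    simp only [ne_iff_lt_or_gt]
  rw [card_neg_eq_card_pos hσ] at hnonzero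
  rw [← card_univ]
  omega

theorem card_image_sq_le (hσ : ∀ a, μ (σ a) = -μ a) :
    #(univ.image (μ · ^ 2)) ≤ #(image μ {a | 0 < μ a}) + min #{a | μ a = 0} 1 := by
  have hsub : univ.image (μ · ^ 2) ⊆
      (image μ {a | 0 < μ a}).image (· ^ 2) ∪ image (μ · ^ 2) {a | μ a = 0} := by
    intro x hx
    obtain ⟨a, -, rfl⟩ := mem_image.mp hx
    simp only [mem_union, mem_image, mem_filter, mem_univ, true_and]
    rcases lt_trichotomy (μ a) 0 with ha | ha | ha
    · exact Or.inl ⟨-μ a, ⟨σ a, by linarith [hσ a], hσ a⟩, neg_sq _⟩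
    · exact Or.inr ⟨a, ha, rfl⟩
    · exact Or.inl ⟨μ a, ⟨a, ha, rfl⟩, rfl⟩
  have hzero : #(image (μ · ^ 2) {a | μ a = 0}) ≤ min #{a | μ a = 0} 1 :=
    le_min card_image_le (card_le_one.mpr fun x hx y hy => by
      obtain ⟨a, ha, rfl⟩ := mem_image.mp hx
      obtain ⟨b, hb, rfl⟩ := mem_image.mp hy
      simp_all)
  calc #(univ.image (μ · ^ 2))
      ≤ #((image μ {a | 0 < μ a}).image (· ^ 2)) + #(image (μ · ^ 2) {a | μ a = 0}) :=
        (card_le_card hsub).trans (card_union_le _ _)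
    _ ≤ _ := add_le_add card_image_le hzero

theorem card_pos_pairSum_eq_card_neg (hσ : ∀ a, μ (σ a) = -μ a) :
    #{z | 0 < pairSum μ z} = #{z | pairSum μ z < 0} := by
  have hmap : ∀ τ : Equiv.Perm ι, (∀ a, μ (τ a) = -μ a) →
      ∀ z, pairSum μ (z.map τ) = -pairSum μ z := fun τ hτ z => by
    induction z using Sym2.ind with
    | _ a b => simp [hτ]; ring
  refine card_nbij' (Sym2.map σ) (Sym2.map σ.symm) (fun z hz => ?_) (fun z hz => ?_)
    (fun z _ => by simp [Sym2.map_map]) (fun z _ => by simp [Sym2.map_map])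
  · simp_all [hmap σ hσ z]
  · simp_all [hmap σ.symm (apply_symm_eq_neg hσ) z]

theorem card_zero_pairSum_le (hσ : ∀ a, μ (σ a) = -μ a) (hinj : Set.InjOn μ {a | 0 < μ a}) :
    #{z | pairSum μ z = 0} ≤ #{a | 0 < μ a} + (#{a | μ a = 0} + 1).choose 2 := by
  classical
  have hpartner : ∀ a b, 0 < μ a → μ a + μ b = 0 → b = σ.symm a := fun a b ha hab =>
    σ.eq_symm_apply.mpr (hinj (by simp [hσ]; linarith) ha (by rw [hσ]; linarith))
  have hsub : ({z | pairSum μ z = 0} : Finset _) ⊆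
      ({a | μ a = 0} : Finset ι).sym2 ∪ image (fun a => s(a, σ.symm a)) {a | 0 < μ a} := by
    intro z hz
    induction z using Sym2.ind with
    | _ a b =>
    simp only [mem_filter, mem_univ, true_and, pairSum_mk] at hz
    simp only [mem_union, mk_mem_sym2_iff, mem_filter, mem_univ, true_and, mem_image]
    rcases lt_trichotomy (μ a) 0 with ha | ha | ha
    · refine Or.inr ⟨b, by linarith, ?_⟩
      rw [hpartner b a (by linarith) (by linarith), Sym2.eq_swap]
    · exact Or.inl ⟨ha, by linarith⟩
    · exact Or.inr ⟨a, ha, by rw [hpartner a b ha hz]⟩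
  calc #{z | pairSum μ z = 0}
      ≤ #(({a | μ a = 0} : Finset ι).sym2) + #(image (fun a => s(a, σ.symm a)) {a | 0 < μ a}) :=
        (card_le_card hsub).trans (card_union_le _ _)
    _ ≤ _ := by
      rw [card_sym2, add_comm]
      gcongr
      exact card_image_le

theorem injOn_pos_of_le_card_image_sq (hσ : ∀ a, μ (σ a) = -μ a) {p : ℕ}
    (hcard : Fintype.card ι ≤ 2 * p + 2) (hsq : p + 1 ≤ #(univ.image (μ · ^ 2))) :
    Set.InjOn μ {a | 0 < μ a} := by
  have hn := card_eq_two_mul_card_pos_add_card_zero hσ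
  have himg := card_image_sq_le hσ
  have hpos := card_image_le (s := {a | 0 < μ a}) (f := μ)
  have : #(image μ {a | 0 < μ a}) = #{a | 0 < μ a} := by omega
  simpa using card_image_iff.mp this

theorem card_nonneg_pairSum_le (hσ : ∀ a, μ (σ a) = -μ a) {p : ℕ}
    (hcard : Fintype.card ι ≤ 2 * p + 2) (hsq : p + 1 ≤ #(univ.image (μ · ^ 2))) :
    (Fintype.card ι = 2 * p + 1 →
      #{z | 0 ≤ pairSum μ z} ≤ p ^ 2 + 2 * p + if ∃ a, μ a = 0 then 1 else 0) ∧
    (Fintype.card ι = 2 * p + 2 →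
      #{z | 0 ≤ pairSum μ z} ≤ p ^ 2 + 3 * p + 2 + if ∃ a, μ a = 0 then 1 else 0) := by
  have hn := card_eq_two_mul_card_pos_add_card_zero hσ
  have hlow : p + 1 ≤ #{a | 0 < μ a} + min #{a | μ a = 0} 1 :=
    hsq.trans <| (card_image_sq_le hσ).trans <| add_le_add_left card_image_le _
  have hdouble : 2 * #{z | 0 ≤ pairSum μ z} ≤
      (Fintype.card ι + 1).choose 2 + #{a | 0 < μ a} + (#{a | μ a = 0} + 1).choose 2 := by
    have htotal : #{z | 0 ≤ pairSum μ z} + #{z | pairSum μ z < 0} =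
        (Fintype.card ι + 1).choose 2 := by
      rw [← Sym2.card, ← card_univ]
      simpa only [not_le] using card_filter_add_card_filter_not (s := univ) (0 ≤ pairSum μ ·)
    have hnonneg : #{z | 0 ≤ pairSum μ z} = #{z | 0 < pairSum μ z} + #{z | pairSum μ z = 0} := by
      classical
      rw [← card_union_of_disjoint (disjoint_filter.mpr fun _ _ h h' => h.ne' h'), ← filter_or]
      simp_rw [le_iff_lt_or_eq, eq_comm]
    linarith [card_pos_pairSum_eq_card_neg hσ,
      card_zero_pairSum_le hσ (injOn_pos_of_le_card_image_sq hσ hcard hsq)]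
  have hzero : (∃ a, μ a = 0) ↔ 0 < #{a | μ a = 0} := by simp [card_pos, filter_nonempty_iff]
  simp only [hzero]
  generalize #{a | μ a = 0} = z at *
  generalize #{a | 0 < μ a} = m at *
  generalize Fintype.card ι = n at *
  subst hn
  have hchoose : 2 * (2 * m + z + 1).choose 2 = (2 * m + z + 1) * (2 * m + z) := by
    rw [Nat.choose_two_right, Nat.mul_div_cancel' (Nat.even_mul_pred_self _).two_dvd]; rfl
  obtain ⟨rfl, rfl⟩ | ⟨rfl, rfl⟩ | ⟨rfl, rfl⟩ :
      (m = p + 1 ∧ z = 0) ∨ (m = p ∧ z = 1) ∨ (m = p ∧ z = 2) := by omega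
  · exact ⟨fun h => by omega, fun _ => by norm_num at hdouble ⊢; linarith⟩
  · exact ⟨fun _ => by norm_num at hdouble ⊢; linarith, fun h => by omega⟩
  · exact ⟨fun h => by omega, fun _ => by norm_num at hdouble ⊢; linarith⟩

end SymmetricSpectrum

namespace Matrix

theorem trace_mul_mul_eq_zero_of_trace_pow_three {ι : Type*} [Fintype ι] [DecidableEq ι]
    {Q : Submodule ℝ (Matrix ι ι ℝ)} (h3 : ∀ X ∈ Q, trace (X ^ 3) = 0)
    {A B : Matrix ι ι ℝ} (hA : A ∈ Q) (hB : B ∈ Q) :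
    trace (A * B * B) = 0 := by
  have hplus := h3 (A + B) (Q.add_mem hA hB)
  have hminus := h3 (A - B) (Q.sub_mem hA hB)
  have hcube : ∀ X Y : Matrix ι ι ℝ, (X + Y) ^ 3 =
      X ^ 3 + (X * X * Y + X * Y * X + Y * X * X) + (X * Y * Y + Y * X * Y + Y * Y * X) + Y ^ 3 :=
    fun X Y => by noncomm_ring
  rw [hcube] at hplus
  rw [sub_eq_add_neg, hcube] at hminus
  simp only [trace_add, trace_neg, neg_mul, mul_neg, neg_neg, Odd.neg_pow (by decide : Odd 3)]
    at hplus hminus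
  have h2 : trace (B * B * A) = trace (A * B * B) := trace_mul_cycle B B A
  have h1 : trace (B * A * B) = trace (A * B * B) := (trace_mul_cycle B A B).trans h2
  linarith [h3 A hA, h3 B hB]

theorem apply_inf_sup_of_transpose_eq {ι α : Type*} [LinearOrder ι] {M : Matrix ι ι α}
    (hM : Mᵀ = M) (a b : ι) : M s(a, b).inf s(a, b).sup = M a b := by
  rcases le_total a b with h | h
  · simp [h]
  · simpa [h] using congrFun (congrFun hM a) b

section
variable {ι : Type*} [Fintype ι] [DecidableEq ι]

theorem apply_eq_zero_of_trace_diagonal_mul_mul_self_eq_zero (μ : ι → ℝ) {M : Matrix ι ι ℝ}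
    (hM : Mᵀ = M) (hq : trace (diagonal μ * M * M) = 0)
    (hpos : ∀ a b, 0 < μ a + μ b → M a b = 0) {a b : ι} (hab : μ a + μ b ≠ 0) : M a b = 0 := by
  have hsymm : ∀ a b, M b a = M a b := fun a b => by rw [← transpose_apply M a b, hM]
  have hrow : ∑ a, ∑ b, μ a * M a b ^ 2 = 0 := by
    rw [← hq]
    simp only [sq, trace, mul_assoc, diag_apply, mul_apply, diagonal_apply, hsymm, mul_sum,
      ite_mul, zero_mul, sum_ite_irrel, sum_const_zero, sum_ite_eq, mem_univ, ↓reduceIte]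
  have hcol : ∑ a, ∑ b, μ b * M a b ^ 2 = 0 := by
    rw [sum_comm]
    simpa only [hsymm] using hrow
  have hsum : ∑ x : ι × ι, (μ x.1 + μ x.2) * M x.1 x.2 ^ 2 = 0 := by
    simp only [Fintype.sum_prod_type, add_mul, sum_add_distrib, hrow, hcol, add_zero]
  have hnonpos : ∀ x : ι × ι, (μ x.1 + μ x.2) * M x.1 x.2 ^ 2 ≤ 0 := by
    rintro ⟨a, b⟩
    rcases le_or_gt (μ a + μ b) 0 with h | h
    · exact mul_nonpos_of_nonpos_of_nonneg h (sq_nonneg _)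
    · simp [hpos a b h]
  simpa [hab] using congrFun ((Fintype.sum_eq_zero_iff_of_nonpos hnonpos).mp hsum) (a, b)

end

section
variable {ι : Type*} [Fintype ι] [LinearOrder ι]

theorem finrank_le_card_of_forall_eq_zero (W : Submodule ℝ (Matrix ι ι ℝ))
    (hsym : ∀ M ∈ W, Mᵀ = M) (T : Finset (Sym2 ι))
    (h : ∀ M ∈ W, (∀ a b, s(a, b) ∈ T → M a b = 0) → M = 0) :
    Module.finrank ℝ W ≤ #T := by
  let eval : W →ₗ[ℝ] (T → ℝ) :=
    { toFun := fun M z => (M : Matrix ι ι ℝ) z.1.inf z.1.sup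
      map_add' := fun _ _ => rfl
      map_smul' := fun _ _ => rfl }
  have hinj : Function.Injective eval := by
    rw [← LinearMap.ker_eq_bot, LinearMap.ker_eq_bot']
    intro M hM
    refine Subtype.ext (h M M.2 fun a b hab => ?_)
    rw [← apply_inf_sup_of_transpose_eq (hsym M M.2)]
    exact congrFun hM ⟨s(a, b), hab⟩
  simpa using LinearMap.finrank_le_finrank_of_injective hinj

theorem finrank_add_le_card_nonneg_pairSum (μ : ι → ℝ) (W : Submodule ℝ (Matrix ι ι ℝ))
    (hsym : ∀ M ∈ W, Mᵀ = M) (htr : ∀ M ∈ W, trace M = 0)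
    (hq : ∀ M ∈ W, trace (diagonal μ * M * M) = 0) :
    Module.finrank ℝ W + (if ∃ a, μ a = 0 then 1 else 0) ≤ #{z | 0 ≤ pairSum μ z} := by
  have hoff : ∀ M ∈ W, (∀ a b, 0 < μ a + μ b → M a b = 0) →
      ∀ a b, μ a + μ b ≠ 0 → M a b = 0 := fun M hM hpos _ _ =>
    apply_eq_zero_of_trace_diagonal_mul_mul_self_eq_zero μ (hsym M hM) (hq M hM) hpos
  split_ifs with hzero
  · obtain ⟨c, hc⟩ := hzero
    have hmem : s(c, c) ∈ ({z | 0 ≤ pairSum μ z} : Finset _) :=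
      mem_filter.mpr ⟨mem_univ _, by simp [hc]⟩
    rw [← card_erase_add_one hmem, add_le_add_iff_right]
    refine finrank_le_card_of_forall_eq_zero W hsym _ fun M hM hvan => ?_
    have hoffdiag : ∀ a b, s(a, b) ≠ s(c, c) → M a b = 0 := by
      intro a b hne
      by_cases hab : μ a + μ b = 0
      · exact hvan a b (by simp [hab, hne])
      refine hoff M hM (fun a' b' h => hvan a' b' ?_) a b hab
      have : s(a', b') ≠ s(c, c) := fun he => by simp_all
      simp [h.le, this]
    have hcc : M c c = 0 := by
      rw [← htr M hM]
      exact (sum_eq_single c (fun a _ hac => hoffdiag a a (by simpa using hac)) (by simp)).symm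
    ext a b
    by_cases h : s(a, b) = s(c, c)
    · obtain ⟨rfl, rfl⟩ : a = c ∧ b = c := by simpa using h
      exact hcc
    · exact hoffdiag a b h
  · refine (add_zero _).le.trans (finrank_le_card_of_forall_eq_zero W hsym _ fun M hM hvan => ?_)
    ext a b
    by_cases hab : μ a + μ b = 0
    · exact hvan a b (by simp [hab])
    · exact hoff M hM (fun a' b' h => hvan a' b' (by simp [h.le])) a b hab

end

theorem trace_conjStarAlgAut {ι R : Type*} [Fintype ι] [DecidableEq ι] [CommRing R]
    [StarRing R] (u : unitary (Matrix ι ι R)) (B : Matrix ι ι R) :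
    trace (Unitary.conjStarAlgAut R _ u B) = trace B := by
  rw [Unitary.conjStarAlgAut_apply, trace_mul_cycle, Unitary.coe_star_mul_self, one_mul]

namespace IsHermitian

section
variable {ι : Type*} [Fintype ι] [DecidableEq ι] {A : Matrix ι ι ℝ} (hA : A.IsHermitian)

theorem conjStarAlgAut_star_eigenvectorUnitary_real :
    Unitary.conjStarAlgAut ℝ _ (star hA.eigenvectorUnitary) A = diagonal hA.eigenvalues :=
  hA.conjStarAlgAut_star_eigenvectorUnitary.trans (by
    rw [RCLike.ofReal_real_eq_id, Function.id_comp])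

theorem sum_eigenvalues_pow (k : ℕ) : ∑ a, hA.eigenvalues a ^ k = trace (A ^ k) := by
  rw [← trace_conjStarAlgAut (star hA.eigenvectorUnitary), map_pow,
    hA.conjStarAlgAut_star_eigenvectorUnitary_real, diagonal_pow, trace_diagonal]
  rfl

theorem linearIndependent_eigenvalues_sq_pow {m : ℕ}
    (h : LinearIndependent ℝ fun j : Fin m => A ^ (2 * (j : ℕ))) :
    LinearIndependent ℝ fun j : Fin m => fun a => (hA.eigenvalues a ^ 2) ^ (j : ℕ) := by
  set φ := Unitary.conjStarAlgAut ℝ _ (star hA.eigenvectorUnitary)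
  refine .of_comp (diagonalLinearMap ι ℝ ℝ) ?_
  have hcomp : (diagonalLinearMap ι ℝ ℝ ∘ fun (j : Fin m) a => (hA.eigenvalues a ^ 2) ^ (j : ℕ)) =
      φ.toAlgEquiv.toLinearEquiv.toLinearMap ∘ fun j : Fin m => A ^ (2 * (j : ℕ)) := by
    ext j : 1
    show diagonal _ = φ (A ^ (2 * (j : ℕ)))
    rw [map_pow, hA.conjStarAlgAut_star_eigenvectorUnitary_real, diagonal_pow, pow_mul]
    rfl
  rw [hcomp]
  exact h.map' _ (LinearEquiv.ker _)

end

theorem finrank_add_le_card_nonneg_pairSum {ι : Type*} [Fintype ι] [LinearOrder ι]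
    {Q : Submodule ℝ (Matrix ι ι ℝ)} (hsym : ∀ B ∈ Q, Bᵀ = B) (htr : ∀ B ∈ Q, trace B = 0)
    (h3 : ∀ B ∈ Q, trace (B ^ 3) = 0) {A : Matrix ι ι ℝ} (hA : A.IsHermitian) (hAQ : A ∈ Q) :
    Module.finrank ℝ Q + (if ∃ a, hA.eigenvalues a = 0 then 1 else 0) ≤
      #{z | 0 ≤ pairSum hA.eigenvalues z} := by
  set φ := Unitary.conjStarAlgAut ℝ _ (star hA.eigenvectorUnitary)
  have hφA : φ A = diagonal hA.eigenvalues := hA.conjStarAlgAut_star_eigenvectorUnitary_real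
  have hφtrace : ∀ B, trace (φ B) = trace B := trace_conjStarAlgAut _
  have hstar : ∀ M : Matrix ι ι ℝ, star M = Mᵀ := fun M =>
    (star_eq_conjTranspose M).trans (conjTranspose_eq_transpose_of_trivial M)
  rw [← LinearEquiv.finrank_map_eq φ.toAlgEquiv.toLinearEquiv]
  refine Matrix.finrank_add_le_card_nonneg_pairSum _ _ ?_ ?_ ?_ <;> rintro _ ⟨B, hB, rfl⟩
  · show (φ B)ᵀ = φ B
    rw [← hstar, ← map_star, hstar, hsym B hB]
  · show trace (φ B) = 0
    rw [hφtrace, htr B hB]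
  · show trace (diagonal hA.eigenvalues * φ B * φ B) = 0
    rw [← hφA, ← map_mul, ← map_mul, hφtrace]
    exact trace_mul_mul_eq_zero_of_trace_pow_three h3 hAQ hB

end IsHermitian

end Matrix

/-- dimension bound for austere subspaces meeting `B_{n,ℝ}`. -/
theorem austere_subspace_dim_bound (n : ℕ) (hn : 3 ≤ n) (p : ℕ) (hp : p = (n - 1) / 2)
    (Q : Submodule ℝ (Matrix (Fin n) (Fin n) ℝ))
    (hsym : ∀ A ∈ Q, Aᵀ = A)
    (haust : ∀ A ∈ Q, ∀ k ≤ p, Matrix.trace (A ^ (2 * k + 1)) = 0)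
    (hmeet : ∃ A ∈ Q, Matrix.trace (A ^ 2) = 1 ∧
      LinearIndependent ℝ (fun α : Fin (p + 1) => A ^ (2 * (α : ℕ)))) :
    (n = 2 * p + 1 → Module.finrank ℝ Q ≤ p ^ 2 + 2 * p) ∧
    (n = 2 * p + 2 → Module.finrank ℝ Q ≤ p ^ 2 + 3 * p + 2) := by
  obtain ⟨A, hAQ, -, hli⟩ := hmeet
  have hA : A.IsHermitian := (conjTranspose_eq_transpose_of_trivial A).trans (hsym A hAQ)
  have hcard : Fintype.card (Fin n) ≤ 2 * p + 2 := by simp; omega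
  have hodd : ∀ k ≤ p, ∑ a, hA.eigenvalues a ^ (2 * k + 1) = 0 := fun k hk =>
    (hA.sum_eigenvalues_pow _).trans (haust A hAQ k hk)
  obtain ⟨σ, hσ⟩ : ∃ σ : Equiv.Perm (Fin n), ∀ a, hA.eigenvalues (σ a) = -hA.eigenvalues a :=
    exists_perm_apply_eq_of_map_eq
      ((map_neg_eq_of_odd_psum_eq_zero _ hcard hodd).symm.trans (Multiset.map_map _ _ _))
  have hdim := hA.finrank_add_le_card_nonneg_pairSum hsym
    (fun B hB => by simpa using haust B hB 0 p.zero_le) (fun B hB => haust B hB 1 (by omega)) hAQ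
  have hcount := card_nonneg_pairSum_le hσ hcard
    (le_card_image_of_linearIndependent_pow _ (hA.linearIndependent_eigenvalues_sq_pow hli))
  simp only [Fintype.card_fin] at hcount
  split_ifs at hdim hcount
  all_goals omega
end

section
/- Let n ≥ 3, p = ⌊(n−1)/2⌋, and let A be an n×n real symmetric matrix with tr(A²) = 1 and tr(A^{2k+1}) = 0 for all 0 ≤ k ≤ p. Then the p matrices A^{2α} − (1/n)·tr(A^{2α})·I_n, for α = 1, …, p, are ℝ-linearly independent if and only if A² has exactly p+1 distinct eigenvalues (equivalently, the eigenvalues of A have the form λ₁, −λ₁, …, arranged in ± pairs together with 0 when n is odd, with the p+1 values λ₁ > λ₂ > … > λ_{p+1} ≥ 0 pairwise distinct). -/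
/-!
Diagonalize `A = U diag(μ) Uᵀ`. Conjugation by `U` and `diagonal` are injective and linear, so the
gradients are independent iff the vectors `i ↦ (μᵢ²)^(α+1) - mean` are, and `spec(A²)` is the set
of values of `μ²`. Having zero sum, these vectors stay independent together with the constant
vector `1`, and all of them factor through `μ²`, so `p + 1 ≤ #{μᵢ²}`. Conversely, a vanishing
combination is a polynomial of degree `≤ p` vanishing at every value of `μ²`.

Newton's identities turn the vanishing odd power sums into vanishing odd elementary symmetric
functions, so `∏ (X - μᵢ) = ∏ (X + μᵢ)` and the eigenvalues come in pairs `±λ`; as `n ≤ 2p + 2`,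
this leaves at most `p + 1` distinct squares.
-/

open Finset Polynomial Matrix Unitary

theorem Multiset.esymm_map_eq_zero_of_odd {σ R : Type*} [Fintype σ] [CommRing R]
    [NoZeroDivisors R] [CharZero R] (μ : σ → R)
    (hμ : ∀ j, Odd j → j ≤ Fintype.card σ → ∑ i, μ i ^ j = 0) {k : ℕ} (hk : Odd k) :
    (univ.val.map μ).esymm k = 0 := by
  induction k using Nat.strong_induction_on with
  | _ k ih =>
  by_cases hkσ : Fintype.card σ < k
  · rw [Multiset.esymm, Multiset.powersetCard_eq_empty k (by simpa using hkσ),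
      Multiset.map_zero, Multiset.sum_zero]
  have newton := congrArg (MvPolynomial.aeval μ) (MvPolynomial.mul_esymm_eq_sum σ R k)
  simp only [map_mul, map_sum, map_pow, map_neg, map_one, map_natCast,
    MvPolynomial.aeval_esymm_eq_multiset_esymm, MvPolynomial.psum, MvPolynomial.aeval_X] at newton
  -- In each term `e_a * p_b` with `a + b = k` odd, either `a < k` is odd or `b ≤ k` is odd.
  rw [Finset.sum_eq_zero fun ab hab => ?_, mul_zero] at newton
  · exact (mul_eq_zero.mp newton).resolve_left (Nat.cast_ne_zero.mpr hk.pos.ne')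
  obtain ⟨hab, hlt⟩ := Finset.mem_filter.mp hab
  rw [Finset.HasAntidiagonal.mem_antidiagonal] at hab
  rcases Nat.even_or_odd ab.1 with ha | ha
  · have hb : Odd ab.2 := (Nat.odd_add'.mp (hab ▸ hk)).mpr ha
    rw [hμ ab.2 hb (by omega), mul_zero]
  · rw [ih ab.1 hlt ha, mul_zero, zero_mul]

theorem Multiset.map_neg_eq_self_of_esymm_odd {R : Type*} [CommRing R] [IsDomain R]
    (s : Multiset R) (hs : ∀ k, Odd k → s.esymm k = 0) : s.map Neg.neg = s := by
  have hprod : ((s.map Neg.neg).map fun a => X - C a).prod = (s.map fun a => X - C a).prod := by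
    rw [prod_X_sub_X_eq_sum_esymm, prod_X_sub_X_eq_sum_esymm, Multiset.card_map]
    refine Finset.sum_congr rfl fun j _ => ?_
    rcases Nat.even_or_odd j with hj | hj
    · simp only [esymm_neg, hj.neg_one_pow, one_mul]
    · rw [esymm_neg, hs j hj, mul_zero]
  simpa only [roots_multiset_prod_X_sub_C] using congrArg roots hprod

theorem Multiset.two_mul_card_toFinset_map_sq_le {K : Type*} [Ring K] [LinearOrder K]
    [IsOrderedAddMonoid K] (s : Multiset K) (hs : s.map Neg.neg = s) :
    2 * (s.map (· ^ 2)).toFinset.card ≤ Multiset.card s + 1 := by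
  set P := s.filter (0 < ·)
  set Q := s.filter (0 ≤ ·)
  have hneg : s.filter (fun x => ¬ 0 ≤ x) = P.map Neg.neg := by
    conv_lhs => rw [← hs]
    simp only [Multiset.filter_map, Function.comp_def, not_le, Left.neg_neg_iff, P]
  have hcard : Multiset.card s = Multiset.card Q + Multiset.card P := by
    conv_lhs => rw [← Multiset.filter_add_not (0 ≤ ·) s]
    rw [Multiset.card_add, hneg, Multiset.card_map]
  have hsq : (s.map (· ^ 2)).toFinset ⊆ Q.toFinset.image (· ^ 2) := by
    intro y hy
    obtain ⟨x, hx, rfl⟩ := Multiset.mem_map.mp (Multiset.mem_toFinset.mp hy)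
    rcases le_total 0 x with h | h
    · exact mem_image_of_mem _ (Multiset.mem_toFinset.mpr (Multiset.mem_filter.mpr ⟨hx, h⟩))
    · have hx' : -x ∈ s := hs ▸ Multiset.mem_map_of_mem Neg.neg hx
      refine mem_image.mpr ⟨-x, Multiset.mem_toFinset.mpr ?_, neg_sq x⟩
      exact Multiset.mem_filter.mpr ⟨hx', neg_nonneg.mpr h⟩
  have hQ : Q.toFinset ⊆ insert 0 P.toFinset := by
    intro x hx
    obtain ⟨hxs, hx0⟩ := Multiset.mem_filter.mp (Multiset.mem_toFinset.mp hx)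
    rcases hx0.eq_or_lt with h | h
    · exact mem_insert.mpr (Or.inl h.symm)
    · exact mem_insert_of_mem (Multiset.mem_toFinset.mpr (Multiset.mem_filter.mpr ⟨hxs, h⟩))
  have h1 := (Finset.card_le_card hsq).trans card_image_le
  have h2 := (Finset.card_le_card hQ).trans (Finset.card_insert_le _ _)
  have h3 := Multiset.toFinset_card_le Q
  have h4 := Multiset.toFinset_card_le P
  omega

theorem card_le_ncard_range_of_linearIndependent {ι X β K : Type*} [Fintype ι] [Fintype β]
    [Field K] (g : ι → X) {v : β → ι → K} (hv : LinearIndependent K v)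
    (hfac : ∀ b, ∃ f : X → K, v b = f ∘ g) :
    Fintype.card β ≤ (Set.range g).ncard := by
  classical
  let F := LinearMap.funLeft K K (Set.rangeFactorization g)
  have hspan : Submodule.span K (Set.range v) ≤ LinearMap.range F := by
    refine Submodule.span_le.mpr ?_
    rintro _ ⟨b, rfl⟩
    obtain ⟨f, hf⟩ := hfac b
    exact ⟨fun x => f x, hf.symm⟩
  calc Fintype.card β = Module.finrank K (Submodule.span K (Set.range v)) :=
        (finrank_span_eq_card hv).symm
    _ ≤ Module.finrank K (LinearMap.range F) := Submodule.finrank_mono hspan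
    _ ≤ Module.finrank K (Set.range g → K) := F.finrank_range_le
    _ = (Set.range g).ncard := by
        rw [Module.finrank_fintype_fun_eq_card, Fintype.card_eq_nat_card, Nat.card_coe_set_eq]

theorem lt_ncard_range_of_linearIndependent_sub_mean {ι X K : Type*} [Fintype ι] [Nonempty ι]
    [Field K] [CharZero K] (g : ι → X) {p : ℕ} (f : Fin p → X → K)
    (hli : LinearIndependent K fun α i => f α (g i) - (∑ j, f α (g j)) / Fintype.card ι) :
    p < (Set.range g).ncard := by
  set w := fun α i => f α (g i) - (∑ j, f α (g j)) / Fintype.card ι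
  have hcard : (Fintype.card ι : K) ≠ 0 := Nat.cast_ne_zero.mpr Fintype.card_ne_zero
  let total : (ι → K) →ₗ[K] K := ∑ i, LinearMap.proj i
  have htotal (v : ι → K) : total v = ∑ i, v i := by simp [total]
  have hw : Submodule.span K (Set.range w) ≤ LinearMap.ker total := by
    refine Submodule.span_le.mpr ?_
    rintro _ ⟨α, rfl⟩
    simp only [SetLike.mem_coe, LinearMap.mem_ker, htotal, w, Finset.sum_sub_distrib,
      Finset.sum_const, Finset.card_univ, nsmul_eq_mul]
    field_simp
    ring
  have hone : (1 : ι → K) ∉ Submodule.span K (Set.range w) := fun h =>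
    hcard (by simpa [htotal] using hw h)
  have hcons := linearIndependent_finCons.mpr ⟨hli, hone⟩
  simpa using card_le_ncard_range_of_linearIndependent g hcons (Fin.cases ⟨fun _ => 1, rfl⟩
    fun α => ⟨fun x => f α x - (∑ j, f α (g j)) / Fintype.card ι, rfl⟩)

theorem linearIndependent_pow_succ_sub_of_lt_ncard {ι K : Type*} [Fintype ι] [CommRing K]
    [IsDomain K] (g : ι → K) {p : ℕ} (c : Fin p → K) (h : p < (Set.range g).ncard) :
    LinearIndependent K fun (α : Fin p) i => g i ^ ((α : ℕ) + 1) - c α := by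
  classical
  rw [Fintype.linearIndependent_iff]
  intro t ht α
  -- `∑ t β • (X ^ (β + 1) - c β)` has degree `≤ p` and vanishes at the `> p` values of `g`.
  set q : K[X] := ∑ β, C (t β) * X ^ ((β : ℕ) + 1) - C (∑ β, t β * c β)
  have hroots : ∀ x ∈ univ.image g, q.eval x = 0 := by
    simp only [mem_image, mem_univ, true_and, forall_exists_index, forall_apply_eq_imp_iff]
    intro i
    have := congrFun ht i
    simp only [Finset.sum_apply, Pi.smul_apply, smul_eq_mul, Pi.zero_apply, mul_sub,
      Finset.sum_sub_distrib] at this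
    simpa [q, eval_finsetSum] using this
  have hdeg : q.natDegree < (univ.image g).card := by
    rw [← Set.ncard_coe_finset, Fintype.coe_image_univ]
    refine lt_of_le_of_lt ((natDegree_sub_le _ _).trans
      (max_le ?_ ((natDegree_C _).trans_le p.zero_le))) h
    refine natDegree_sum_le_of_forall_le _ _ fun β _ => ?_
    exact (natDegree_C_mul_X_pow_le _ _).trans β.isLt
  have hq := congrArg (coeff · ((α : ℕ) + 1))
    (eq_zero_of_natDegree_lt_card_of_eval_eq_zero' q _ hroots hdeg)
  simpa [q, finsetSum_coeff, coeff_C_mul_X_pow, coeff_C, Fin.val_inj] using hq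

theorem linearIndependent_pow_succ_sub_mean_iff {ι K : Type*} [Fintype ι] [Nonempty ι] [Field K]
    [CharZero K] (g : ι → K) (p : ℕ) :
    LinearIndependent K (fun (α : Fin p) i =>
        g i ^ ((α : ℕ) + 1) - (∑ j, g j ^ ((α : ℕ) + 1)) / Fintype.card ι) ↔
      p < (Set.range g).ncard :=
  ⟨lt_ncard_range_of_linearIndependent_sub_mean g fun α x => x ^ ((α : ℕ) + 1),
    linearIndependent_pow_succ_sub_of_lt_ncard g _⟩

namespace Matrix.IsHermitian

variable {ι : Type*} [Fintype ι] [DecidableEq ι] {A : Matrix ι ι ℝ} (hA : A.IsHermitian)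

theorem pow_eq_conjStarAlgAut_diagonal (k : ℕ) :
    A ^ k = conjStarAlgAut ℝ _ hA.eigenvectorUnitary (diagonal fun i => hA.eigenvalues i ^ k) := by
  conv_lhs => rw [hA.spectral_theorem]
  rw [← map_pow, diagonal_pow]
  rfl

theorem trace_pow (k : ℕ) : trace (A ^ k) = ∑ i, hA.eigenvalues i ^ k := by
  rw [hA.pow_eq_conjStarAlgAut_diagonal, conjStarAlgAut_apply, trace_mul_cycle,
    coe_star_mul_self, one_mul, trace_diagonal]

theorem spectrum_pow (k : ℕ) : spectrum ℝ (A ^ k) = Set.range fun i => hA.eigenvalues i ^ k := by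
  rw [hA.pow_eq_conjStarAlgAut_diagonal, AlgEquiv.spectrum_eq, spectrum_diagonal]

theorem pow_sub_trace_smul_one (k : ℕ) (c : ℝ) :
    A ^ k - (trace (A ^ k) / c) • 1 = conjStarAlgAut ℝ _ hA.eigenvectorUnitary
      (diagonal fun i => hA.eigenvalues i ^ k - (∑ j, hA.eigenvalues j ^ k) / c) := by
  rw [hA.trace_pow, hA.pow_eq_conjStarAlgAut_diagonal, ← map_one (conjStarAlgAut ℝ _ _),
    ← map_smul, ← map_sub, smul_one_eq_diagonal, diagonal_sub]

theorem linearIndependent_pow_sub_trace_smul_one_iff {β : Type*} (k : β → ℕ) (c : ℝ) :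
    LinearIndependent ℝ (fun b => A ^ k b - (trace (A ^ k b) / c) • 1) ↔
      LinearIndependent ℝ fun b i =>
        hA.eigenvalues i ^ k b - (∑ j, hA.eigenvalues j ^ k b) / c := by
  let L := (conjStarAlgAut ℝ _ hA.eigenvectorUnitary).toAlgEquiv.toLinearMap ∘ₗ
    diagonalLinearMap ι ℝ ℝ
  have hL : LinearMap.ker L = ⊥ :=
    LinearMap.ker_eq_bot.mpr ((conjStarAlgAut ℝ _ _).injective.comp diagonal_injective)
  have hfam : (fun b => A ^ k b - (trace (A ^ k b) / c) • 1) = L ∘ _ :=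
    funext fun b => hA.pow_sub_trace_smul_one (k b) c
  rw [hfam]
  exact L.linearIndependent_iff hL

end Matrix.IsHermitian

theorem gradients_linearIndependent_iff_card_spectrum_general
    (n : ℕ) (hn : 3 ≤ n) (p : ℕ) (hp : p = (n - 1) / 2)
    (A : Matrix (Fin n) (Fin n) ℝ) (hAsym : Aᵀ = A)
    (hodd : ∀ k ≤ p, Matrix.trace (A ^ (2 * k + 1)) = 0) :
    LinearIndependent ℝ
        (fun α : Fin p =>
          A ^ (2 * ((α : ℕ) + 1)) -
            (Matrix.trace (A ^ (2 * ((α : ℕ) + 1))) / (n : ℝ)) •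
              (1 : Matrix (Fin n) (Fin n) ℝ)) ↔
      (spectrum ℝ (A ^ 2)).ncard = p + 1 := by
  have hA : A.IsHermitian := (conjTranspose_eq_transpose_of_trivial A).trans hAsym
  have : Nonempty (Fin n) := ⟨⟨0, by omega⟩⟩
  have hpsum : ∀ j, Odd j → j ≤ Fintype.card (Fin n) → ∑ i, hA.eigenvalues i ^ j = 0 := by
    rintro _ ⟨k, rfl⟩ hk
    rw [← hA.trace_pow]
    exact hodd k (by rw [Fintype.card_fin] at hk; omega)
  have hsymm := (univ.val.map hA.eigenvalues).map_neg_eq_self_of_esymm_odd fun _ =>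
    Multiset.esymm_map_eq_zero_of_odd hA.eigenvalues hpsum
  have hsq : 2 * (Set.range fun i => hA.eigenvalues i ^ 2).ncard ≤ n + 1 := by
    rw [← Fintype.coe_image_univ, Set.ncard_coe_finset]
    have := Multiset.two_mul_card_toFinset_map_sq_le _ hsymm
    rwa [Multiset.map_map, Multiset.card_map, Finset.card_val, Finset.card_univ,
      Fintype.card_fin] at this
  have hpowers := linearIndependent_pow_succ_sub_mean_iff (fun i => hA.eigenvalues i ^ 2) p
  simp only [← pow_mul, Fintype.card_fin] at hpowers
  rw [hA.linearIndependent_pow_sub_trace_smul_one_iff (fun α : Fin p => 2 * ((α : ℕ) + 1)),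
    hA.spectrum_pow, hpowers]
  omega

/-- for an austere unit-norm symmetric matrix `A`, the gradients
`A^{2α} - (1/n) tr(A^{2α}) I` (`1 ≤ α ≤ p`) are linearly independent iff `A²` has
exactly `p+1` distinct eigenvalues. -/
theorem gradients_linearIndependent_iff_card_spectrum
    (n : ℕ) (hn : 3 ≤ n) (p : ℕ) (hp : p = (n - 1) / 2)
    (A : Matrix (Fin n) (Fin n) ℝ) (hAsym : Aᵀ = A)
    (hA2 : Matrix.trace (A ^ 2) = 1)
    (hodd : ∀ k ≤ p, Matrix.trace (A ^ (2 * k + 1)) = 0) :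
    LinearIndependent ℝ
        (fun α : Fin p =>
          A ^ (2 * ((α : ℕ) + 1)) -
            (Matrix.trace (A ^ (2 * ((α : ℕ) + 1))) / (n : ℝ)) •
              (1 : Matrix (Fin n) (Fin n) ℝ)) ↔
      (spectrum ℝ (A ^ 2)).ncard = p + 1 :=
  gradients_linearIndependent_iff_card_spectrum_general n hn p hp A hAsym hodd
end

section
/- Let n = 2p+1 with p ≥ 1 and let A = диag(λ₁, −λ₁, λ₂, −λ₂, …, λ_p, −λ_p, 0) be the n×n diagonal matrix with λ₁ > λ₂ > … > λ_p > 0 and 2(λ₁² + … + λ_p²) = 1. Then the subspace {X an n×n real symmetric matrix : tr X = 0, tr(XA) = 0, and tr(X A^{2α}) = 0 for all 1 ≤ α ≤ p} is exactly the ℝ-linear span of the set {Ê_{ij} : 1 ≤ i < j ≤ n} ∪ {X_α(A) : 1 ≤ α ≤ p−1}. -/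
/-
Off-diagonal symmetric matrices are trace-orthogonal to all diagonal matrices, so everything
reduces to diagonal `X`. Since the `2p+1` diagonal entries of `A` are distinct, a diagonal matrix
is a polynomial of degree `≤ 2p` in `A` (Vandermonde), hence an even part in `span {A^(2a)}` plus
an odd part in `span {A^(2b+1)}`. The spectrum of `A` is symmetric, so odd powers of `A` are
traceless and the two parts are trace-orthogonal; the conditions `tr (X A^(2a)) = 0` then make
the even part orthogonal to itself, hence zero. Finally the projection `X ↦ X - tr (X A) • A`
fixes `X` (as `tr (X A) = 0`), kills `A` (as `tr A² = 1`) and sends `A^(2α+1)` to `X_α(A)`.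
-/

open Matrix Submodule

section
variable {n R : Type*} [Fintype n] [CommRing R]

def symmTraceOrthogonal (s : Set (Matrix n n R)) : Submodule R (Matrix n n R) where
  carrier := {X | Xᵀ = X ∧ ∀ B ∈ s, trace (X * B) = 0}
  add_mem' := by
    rintro X Y ⟨hX, hXs⟩ ⟨hY, hYs⟩
    refine ⟨by rw [transpose_add, hX, hY], fun B hB => ?_⟩
    rw [add_mul, trace_add, hXs B hB, hYs B hB, add_zero]
  zero_mem' := ⟨transpose_zero, fun B _ => by rw [zero_mul, trace_zero]⟩
  smul_mem' := by
    rintro c X ⟨hX, hXs⟩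
    refine ⟨by rw [transpose_smul, hX], fun B hB => ?_⟩
    rw [smul_mul, trace_smul, hXs B hB, smul_zero]

theorem mem_symmTraceOrthogonal {s : Set (Matrix n n R)} {X : Matrix n n R} :
    X ∈ symmTraceOrthogonal s ↔ Xᵀ = X ∧ ∀ B ∈ s, trace (X * B) = 0 :=
  Iff.rfl

theorem symmTraceOrthogonal_anti {s t : Set (Matrix n n R)} (h : s ⊆ t) :
    symmTraceOrthogonal t ≤ symmTraceOrthogonal s :=
  fun _ hX => ⟨hX.1, fun B hB => hX.2 B (h hB)⟩

variable [DecidableEq n]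

theorem coe_symmTraceOrthogonal_insert_even_pow (A : Matrix n n R) (p : ℕ) :
    (symmTraceOrthogonal (insert A {B | ∃ a ≤ p, B = A ^ (2 * a)}) : Set (Matrix n n R)) =
      {X | Xᵀ = X ∧ trace X = 0 ∧ trace (X * A) = 0 ∧
        ∀ α, 1 ≤ α → α ≤ p → trace (X * A ^ (2 * α)) = 0} := by
  ext X
  simp only [SetLike.mem_coe, mem_symmTraceOrthogonal, Set.forall_mem_insert, Set.mem_ofPred_eq,
    forall_exists_index, and_imp]
  refine and_congr_right fun _ => ⟨fun ⟨hA, hE⟩ => ?_, fun ⟨h0, hA, hE⟩ => ⟨hA, ?_⟩⟩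
  · exact ⟨by simpa using hE _ 0 p.zero_le rfl, hA, fun α _ hα => hE _ α hα rfl⟩
  · rintro _ (_ | a) ha rfl
    · simpa using h0
    · exact hE _ a.succ_pos ha

theorem single_add_single_mem_symmTraceOrthogonal {s : Set (Matrix n n R)}
    (hs : s ⊆ Set.range diagonal) {i j : n} (hij : i ≠ j) :
    single i j 1 + single j i 1 ∈ symmTraceOrthogonal s := by
  refine ⟨by rw [transpose_add, transpose_single, transpose_single, add_comm], ?_⟩
  rintro _ hB
  obtain ⟨w, rfl⟩ := hs hB
  rw [add_mul, trace_add, trace_single_mul, trace_single_mul, diagonal_apply_ne _ hij.symm,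
    diagonal_apply_ne _ hij, smul_zero, add_zero]

theorem pow_sub_trace_smul_mem_symmTraceOrthogonal {A : Matrix n n R} (hA : Aᵀ = A)
    (hodd : ∀ m, trace (A ^ (2 * m + 1)) = 0) (hsq : trace (A ^ 2) = 1) (α p : ℕ) :
    A ^ (2 * α + 1) - trace (A ^ (2 * α + 2)) • A ∈
      symmTraceOrthogonal (insert A {B | ∃ a ≤ p, B = A ^ (2 * a)}) := by
  refine ⟨by rw [transpose_sub, transpose_smul, transpose_pow, hA], ?_⟩
  rintro B (rfl | ⟨a, -, rfl⟩)
  · rw [sub_mul, smul_mul, ← pow_succ, ← sq, trace_sub, trace_smul, hsq, smul_eq_mul, mul_one,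
      sub_self]
  · rw [sub_mul, smul_mul, ← pow_add, ← pow_succ', trace_sub, trace_smul,
      show 2 * α + 1 + 2 * a = 2 * (α + a) + 1 by ring, hodd, hodd, smul_zero, sub_zero]

theorem mem_span_sub_trace_smul_of_mem_span_odd_pow {A D : Matrix n n R} {p : ℕ}
    (hsq : trace (A ^ 2) = 1)
    (hD : D ∈ span R {B | ∃ b < p, B = A ^ (2 * b + 1)}) (hDA : trace (D * A) = 0) :
    D ∈ span R {M | ∃ α, 1 ≤ α ∧ α ≤ p - 1 ∧
      M = A ^ (2 * α + 1) - trace (A ^ (2 * α + 2)) • A} := by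
  let P : Matrix n n R →ₗ[R] Matrix n n R :=
    LinearMap.id - ((traceLinearMap n R R).comp (LinearMap.mulRight R A)).smulRight A
  have hP : ∀ M, P M = M - trace (M * A) • A := fun M => rfl
  have hPD : P D = D := by rw [hP, hDA, zero_smul, sub_zero]
  rw [← hPD]
  refine span_le.2 ?_ (apply_mem_span_image_of_mem_span P hD)
  rintro _ ⟨_, ⟨b, hb, rfl⟩, rfl⟩
  rcases b with _ | α
  · simp [hP, ← sq, hsq]
  · refine subset_span ⟨α + 1, by omega, by omega, ?_⟩
    rw [hP, ← pow_succ]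

end

theorem mem_span_single_add_single_sup_range_diagonal {n K : Type*} [Fintype n] [DecidableEq n]
    [LinearOrder n] [Field K] [NeZero (2 : K)] {X : Matrix n n K} (hX : Xᵀ = X) :
    X ∈ span K {M | ∃ i j : n, i < j ∧ M = single i j 1 + single j i 1} ⊔
      LinearMap.range (diagonalLinearMap n K K) := by
  set T := span K {M | ∃ i j : n, i < j ∧ M = single i j 1 + single j i 1} ⊔
      LinearMap.range (diagonalLinearMap n K K)
  have hpair : ∀ i j : n, single i j (1 : K) + single j i 1 ∈ T := by
    intro i j
    rcases lt_trichotomy i j with h | rfl | h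
    · exact mem_sup_left (subset_span ⟨i, j, h, rfl⟩)
    · refine mem_sup_right ⟨Pi.single i 2, ?_⟩
      simp [← single_add, one_add_one_eq_two, diagonal_single]
    · exact mem_sup_left (subset_span ⟨j, i, h, add_comm _ _⟩)
  have hsum : (2 : K) • X = ∑ i, ∑ j, X i j • (single i j 1 + single j i 1) := by
    ext a b
    have hba : X b a = X a b := by rw [← transpose_apply X a b, hX]
    simp [Matrix.sum_apply, single_apply, Finset.sum_add_distrib, ite_and, hba, two_mul]
  have h2X : (2 : K) • X ∈ T := by
    rw [hsum]
    exact sum_mem fun i _ => sum_mem fun j _ => smul_mem _ _ (hpair i j)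
  simpa [inv_smul_smul₀ (two_ne_zero' K)] using T.smul_mem (2 : K)⁻¹ h2X

theorem diagonal_mem_span_pow_of_injective {K : Type*} [Field K] {n : ℕ} {d : Fin n → K}
    (hd : Function.Injective d) (w : Fin n → K) :
    diagonal w ∈ span K {B | ∃ m < n, B = diagonal d ^ m} := by
  obtain ⟨c, hc⟩ := mulVec_surjective_iff_isUnit.2
    ((isUnit_iff_isUnit_det _).2 (det_vandermonde_ne_zero_iff.2 hd).isUnit) w
  have hw : diagonal w = ∑ m : Fin n, c m • diagonal d ^ (m : ℕ) := by
    rw [← hc]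
    ext i j
    by_cases hij : i = j
    · subst hij
      simp [Matrix.sum_apply, diagonal_pow, mulVec, dotProduct, vandermonde_apply, mul_comm]
    · simp [Matrix.sum_apply, diagonal_pow, hij]
  rw [hw]
  exact sum_mem fun m _ => smul_mem _ _ (subset_span ⟨m, m.isLt, rfl⟩)

theorem mem_span_odd_pow_of_mem_symmTraceOrthogonal {n : Type*} [Fintype n] [DecidableEq n]
    {A D : Matrix n n ℝ} {p : ℕ} (hA : Aᵀ = A) (hodd : ∀ m, trace (A ^ (2 * m + 1)) = 0)
    (hD : D ∈ span ℝ {B | ∃ m < 2 * p + 1, B = A ^ m})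
    (hDE : D ∈ symmTraceOrthogonal {B | ∃ a ≤ p, B = A ^ (2 * a)}) :
    D ∈ span ℝ {B | ∃ b < p, B = A ^ (2 * b + 1)} := by
  set E := {B | ∃ a ≤ p, B = A ^ (2 * a)}
  set O := {B | ∃ b < p, B = A ^ (2 * b + 1)}
  have hsplit : {B | ∃ m < 2 * p + 1, B = A ^ m} ⊆ E ∪ O := by
    rintro _ ⟨m, hm, rfl⟩
    obtain ⟨k, rfl | rfl⟩ := Nat.even_or_odd' m
    · exact Or.inl ⟨k, by omega, rfl⟩
    · exact Or.inr ⟨k, by omega, rfl⟩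
  have hEO : D ∈ span ℝ E ⊔ span ℝ O := by
    rw [← span_union]
    exact span_mono hsplit hD
  obtain ⟨e, he, o, ho, rfl⟩ := mem_sup.1 hEO
  have hOE : span ℝ O ≤ symmTraceOrthogonal E := by
    refine span_le.2 ?_
    rintro _ ⟨b, -, rfl⟩
    refine ⟨by rw [transpose_pow, hA], ?_⟩
    rintro _ ⟨a, -, rfl⟩
    rw [← pow_add, show 2 * b + 1 + 2 * a = 2 * (a + b) + 1 by ring, hodd]
  have heE : e ∈ symmTraceOrthogonal E := by
    simpa using sub_mem hDE (hOE ho)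
  have hEe : span ℝ E ≤ symmTraceOrthogonal {e} := by
    refine span_le.2 ?_
    rintro _ ⟨a, ha, rfl⟩
    refine ⟨by rw [transpose_pow, hA], ?_⟩
    rintro _ rfl
    rw [trace_mul_comm]
    exact heE.2 _ ⟨a, ha, rfl⟩
  have hee : trace (e * eᴴ) = 0 := by
    rw [conjTranspose_eq_transpose_of_trivial, heE.1]
    exact (hEe he).2 e rfl
  rw [trace_mul_conjTranspose_self_eq_zero_iff.1 hee, zero_add]
  exact ho

theorem symmTraceOrthogonal_insert_even_pow_eq_span {p : ℕ} {d : Fin (2 * p + 1) → ℝ}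
    (hd : Function.Injective d) (hodd : ∀ m, trace (diagonal d ^ (2 * m + 1)) = 0)
    (hsq : trace (diagonal d ^ 2) = 1) :
    symmTraceOrthogonal (insert (diagonal d) {B | ∃ a ≤ p, B = diagonal d ^ (2 * a)}) =
      span ℝ ({M | ∃ i j : Fin (2 * p + 1), i < j ∧
          M = (Real.sqrt 2)⁻¹ • (single i j 1 + single j i 1)} ∪
        {M | ∃ α, 1 ≤ α ∧ α ≤ p - 1 ∧
          M = diagonal d ^ (2 * α + 1) - trace (diagonal d ^ (2 * α + 2)) • diagonal d}) := by
  set A := diagonal d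
  have hAt : Aᵀ = A := diagonal_transpose d
  have hdiag : insert A {B | ∃ a ≤ p, B = A ^ (2 * a)} ⊆ Set.range diagonal := by
    rintro _ (rfl | ⟨a, -, rfl⟩)
    · exact ⟨d, rfl⟩
    · exact ⟨_, (diagonal_pow d _).symm⟩
  set S := symmTraceOrthogonal (insert A {B | ∃ a ≤ p, B = A ^ (2 * a)})
  refine le_antisymm (fun X hX => ?_) (span_le.2 ?_)
  · obtain ⟨g, hg, _, ⟨w, rfl⟩, rfl⟩ :=
      mem_sup.1 (mem_span_single_add_single_sup_range_diagonal hX.1)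
    have hgS : g ∈ S := by
      refine span_le.2 ?_ hg
      rintro _ ⟨i, j, hij, rfl⟩
      exact single_add_single_mem_symmTraceOrthogonal hdiag hij.ne
    have hw : diagonal w ∈ S := by simpa using sub_mem hX hgS
    refine add_mem (span_le.2 ?_ hg) (span_mono Set.subset_union_right ?_)
    · rintro _ ⟨i, j, hij, rfl⟩
      rw [← smul_inv_smul₀ (Real.sqrt_ne_zero'.2 two_pos) (single i j 1 + single j i 1)]
      exact smul_mem _ _ (subset_span (Or.inl ⟨i, j, hij, rfl⟩))
    · exact mem_span_sub_trace_smul_of_mem_span_odd_pow hsq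
        (mem_span_odd_pow_of_mem_symmTraceOrthogonal hAt hodd
          (diagonal_mem_span_pow_of_injective hd w)
          (symmTraceOrthogonal_anti (Set.subset_insert _ _) hw))
        (hw.2 A (Set.mem_insert _ _))
  · rintro _ (⟨i, j, hij, rfl⟩ | ⟨α, -, -, rfl⟩)
    · exact smul_mem _ _ (single_add_single_mem_symmTraceOrthogonal hdiag hij.ne)
    · exact pow_sub_trace_smul_mem_symmTraceOrthogonal hAt hodd hsq α p

def oddSpectrum {p : ℕ} (lam : Fin p → ℝ) : Fin (2 * p + 1) → ℝ := fun i =>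
  if h : (i : ℕ) < 2 * p then
    (-1) ^ ((i : ℕ) % 2) * lam ⟨(i : ℕ) / 2, Nat.div_lt_of_lt_mul h⟩
  else 0

theorem sum_oddSpectrum {p : ℕ} {M : Type*} [AddCommMonoid M] (lam : Fin p → ℝ)
    (f : ℝ → M) :
    ∑ i, f (oddSpectrum lam i) = ∑ k, (f (lam k) + f (-lam k)) + f 0 := by
  rw [Fin.sum_univ_castSucc]
  congr 1
  · rw [← (finProdFinEquiv.trans (finCongr (mul_comm p 2))).sum_comp, Fintype.sum_prod_type]
    refine Finset.sum_congr rfl fun k _ => ?_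
    have hk : 1 + 2 * (k : ℕ) < 2 * p := by omega
    have hk2 : (1 + 2 * (k : ℕ)) / 2 = k := by omega
    simp [Fin.sum_univ_two, oddSpectrum, hk, hk2]
  · simp [oddSpectrum]

theorem oddSpectrum_injective {p : ℕ} {lam : Fin p → ℝ} (hlam : Function.Injective lam)
    (hpos : ∀ k, 0 < lam k) : Function.Injective (oddSpectrum lam) := by
  intro i j hij
  have hi := i.isLt
  have hj := j.isLt
  unfold oddSpectrum at hij
  split_ifs at hij with hi' hj' hj'
  · have hposi := hpos ⟨(i : ℕ) / 2, by omega⟩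
    have hposj := hpos ⟨(j : ℕ) / 2, by omega⟩
    rcases Nat.mod_two_eq_zero_or_one i with hi2 | hi2 <;>
      rcases Nat.mod_two_eq_zero_or_one j with hj2 | hj2 <;>
      simp only [hi2, hj2, pow_zero, pow_one, one_mul, neg_one_mul, neg_inj] at hij
    · exact Fin.ext (by have := Fin.mk.inj_iff.1 (hlam hij); omega)
    · linarith
    · linarith
    · exact Fin.ext (by have := Fin.mk.inj_iff.1 (hlam hij); omega)
  · exact absurd hij (mul_ne_zero (pow_ne_zero _ (by norm_num)) (hpos _).ne')
  · exact absurd hij.symm (mul_ne_zero (pow_ne_zero _ (by norm_num)) (hpos _).ne')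
  · exact Fin.ext (by omega)

theorem trace_diagonal_oddSpectrum_pow_odd {p : ℕ} (lam : Fin p → ℝ) (m : ℕ) :
    trace (diagonal (oddSpectrum lam) ^ (2 * m + 1)) = 0 := by
  simp [diagonal_pow, sum_oddSpectrum lam (· ^ (2 * m + 1)), Odd.neg_pow ⟨m, rfl⟩]

theorem trace_diagonal_oddSpectrum_sq {p : ℕ} {lam : Fin p → ℝ}
    (hsum : 2 * ∑ k, lam k ^ 2 = 1) : trace (diagonal (oddSpectrum lam) ^ 2) = 1 := by
  simp [diagonal_pow, sum_oddSpectrum lam (· ^ 2), ← hsum, Finset.sum_add_distrib, two_mul]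

/-- tangent space of `B_{n,ℝ}` at a diagonal point, odd case `n = 2p+1`. -/
theorem tangent_space_odd_case (p : ℕ) (lam : Fin p → ℝ)
    (hanti : StrictAnti lam) (hpos : ∀ i, 0 < lam i)
    (hsum : 2 * ∑ i, lam i ^ 2 = 1)
    (A : Matrix (Fin (2 * p + 1)) (Fin (2 * p + 1)) ℝ)
    (hA : A = Matrix.diagonal (fun i : Fin (2 * p + 1) =>
      if h : (i : ℕ) < 2 * p then
        (-1 : ℝ) ^ ((i : ℕ) % 2) * lam ⟨(i : ℕ) / 2, by omega⟩
      else 0)) :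
    {X : Matrix (Fin (2 * p + 1)) (Fin (2 * p + 1)) ℝ |
        Xᵀ = X ∧ Matrix.trace X = 0 ∧ Matrix.trace (X * A) = 0 ∧
          ∀ α, 1 ≤ α → α ≤ p → Matrix.trace (X * A ^ (2 * α)) = 0} =
      ↑(Submodule.span ℝ
        ({M | ∃ i j : Fin (2 * p + 1), i < j ∧
            M = (Real.sqrt 2)⁻¹ •
              (Matrix.single i j 1 + Matrix.single j i 1)} ∪
         {M | ∃ α, 1 ≤ α ∧ α ≤ p - 1 ∧
            M = A ^ (2 * α + 1) - Matrix.trace (A ^ (2 * α + 2)) • A})) := by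
  replace hA : A = diagonal (oddSpectrum lam) := hA
  subst hA
  rw [← coe_symmTraceOrthogonal_insert_even_pow,
    symmTraceOrthogonal_insert_even_pow_eq_span (oddSpectrum_injective hanti.injective hpos)
      (trace_diagonal_oddSpectrum_pow_odd lam) (trace_diagonal_oddSpectrum_sq hsum)]
end

section
/- Let n = 2p+2 with p ≥ 1 and let A = diag(λ₁, −λ₁, λ₂, −λ₂, …, λ_{p+1}, −λ_{p+1}) be the n×n diagonal matrix with λ₁ > λ₂ > … > λ_{p+1} > 0 and 2(λ₁² + … + λ_{p+1}²) = 1. Then the subspace {X an n×n real symmetric matrix : tr X = 0, tr(XA) = 0, and tr(X A^{2α}) = 0 for all 1 ≤ α ≤ p} is exactly the ℝ-linear span of the set {Ê_{ij} : 1 ≤ i < j ≤ n} ∪ {X_α(A) : 1 ≤ α ≤ p}. -/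
/-!
Write `A = diagonal a`. The trace conditions only see the diagonal `d` of `X`, through
the products `d ⬝ᵥ a ^ k`, while the off-diagonal part of a symmetric `X` lies in the span of the
`Ê_ij`. The `2p + 2` entries of `a` are distinct, so the powers `a ^ 0, …, a ^ (2p+1)` span
`ℝ^(2p+2)` (Vandermonde). The spectrum is symmetric, so every odd power is orthogonal to every
even power, and a `d` orthogonal to all even powers lies in the span of the odd ones. Finally
`tr A² = 1` makes `d ↦ d - (a ⬝ᵥ d) • a` fix such a `d` with `a ⬝ᵥ d = 0`, kill `a = a ^ 1`, and
turn `a ^ (2α+1)` into `X_α(A)`.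
-/

open Matrix

section DotProduct

variable {K ι : Type*} [Fintype ι]

theorem dotProduct_eq_zero_of_mem_span [CommSemiring K] {s : Set (ι → K)} {x y : ι → K}
    (hs : ∀ z ∈ s, x ⬝ᵥ z = 0) (hy : y ∈ Submodule.span K s) : x ⬝ᵥ y = 0 := by
  induction hy using Submodule.span_induction with
  | mem z hz => exact hs z hz
  | zero => exact dotProduct_zero x
  | add y z _ _ hy hz => rw [dotProduct_add, hy, hz, add_zero]
  | smul c y _ hy => rw [dotProduct_smul, hy, smul_zero]

theorem mem_span_of_dotProduct_eq_zero [Field K] [LinearOrder K] [IsStrictOrderedRing K]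
    {s t : Set (ι → K)} (htop : Submodule.span K (s ∪ t) = ⊤)
    (horth : ∀ x ∈ s, ∀ y ∈ t, x ⬝ᵥ y = 0) {d : ι → K} (hd : ∀ x ∈ s, d ⬝ᵥ x = 0) :
    d ∈ Submodule.span K t := by
  have hd' : d ∈ Submodule.span K s ⊔ Submodule.span K t := by
    rw [← Submodule.span_union, htop]
    trivial
  obtain ⟨x, hx, y, hy, rfl⟩ := Submodule.mem_sup.mp hd'
  have hzx : ∀ z ∈ t, z ⬝ᵥ x = 0 := fun z hz =>
    dotProduct_eq_zero_of_mem_span (fun w hw => by rw [dotProduct_comm]; exact horth w hw z hz) hx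
  have hxy : x ⬝ᵥ y = 0 :=
    dotProduct_eq_zero_of_mem_span (fun z hz => by rw [dotProduct_comm]; exact hzx z hz) hy
  have hxx : x ⬝ᵥ x = 0 := by
    have h := dotProduct_eq_zero_of_mem_span hd hx
    rwa [add_dotProduct, dotProduct_comm y, hxy, add_zero] at h
  rwa [dotProduct_self_eq_zero.mp hxx, zero_add]

end DotProduct

theorem mem_span_image_sub_smul {R M : Type*} [CommRing R] [AddCommGroup M] [Module R M]
    (f : M →ₗ[R] R) {v : M} (hv : f v = 1) {s : Set M} {x : M}
    (hx : x ∈ Submodule.span R (insert v s)) (hfx : f x = 0) :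
    x ∈ Submodule.span R ((fun y => y - f y • v) '' s) := by
  let L : M →ₗ[R] M := LinearMap.id - f.smulRight v
  have hLx : L x = x := by simp [L, hfx]
  have hLv : L v = 0 := by simp [L, hv]
  have hL : (fun y => y - f y • v) = L := rfl
  rw [hL, ← hLx, ← Submodule.span_insert_zero, ← hLv, ← Set.image_insert_eq, ← Submodule.map_span]
  exact Submodule.mem_map_of_mem hx

section Powers

variable {K : Type*} [Field K]

theorem span_range_pow_eq_top {n : ℕ} {a : Fin n → K} (ha : Function.Injective a) :
    Submodule.span K (Set.range fun j : Fin n => a ^ (j : ℕ)) = ⊤ := by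
  have hunit : IsUnit (vandermonde a) := by
    rw [isUnit_iff_isUnit_det, isUnit_iff_ne_zero]
    exact det_vandermonde_ne_zero_iff.mpr ha
  have hsurj : Function.Surjective (vandermonde a).mulVecLin :=
    mulVec_surjective_iff_isUnit.mpr hunit
  rw [← LinearMap.range_eq_top.mpr hsurj, range_mulVecLin]
  rfl

variable {p : ℕ} {a : Fin (2 * p + 2) → K}

theorem span_even_pow_union_odd_pow_eq_top (ha : Function.Injective a) :
    Submodule.span K ((fun α => a ^ (2 * α)) '' Set.Iic p ∪
      (fun α => a ^ (2 * α + 1)) '' Set.Iic p) = ⊤ := by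
  refine eq_top_iff.mpr ((span_range_pow_eq_top ha).ge.trans (Submodule.span_mono ?_))
  rintro _ ⟨j, rfl⟩
  have hj := j.isLt
  rcases Nat.even_or_odd' (j : ℕ) with ⟨α, hα | hα⟩
  · exact Or.inl ⟨α, by simp only [Set.mem_Iic]; omega, by simp only [hα]⟩
  · exact Or.inr ⟨α, by simp only [Set.mem_Iic]; omega, by simp only [hα]⟩

variable [LinearOrder K] [IsStrictOrderedRing K]

theorem mem_span_odd_pow_of_dotProduct_even_pow_eq_zero (ha : Function.Injective a)
    (hodd : ∀ m, ∑ i, a i ^ (2 * m + 1) = 0) {d : Fin (2 * p + 2) → K}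
    (hd : ∀ α ≤ p, d ⬝ᵥ a ^ (2 * α) = 0) :
    d ∈ Submodule.span K ((fun α => a ^ (2 * α + 1)) '' Set.Iic p) := by
  refine mem_span_of_dotProduct_eq_zero (span_even_pow_union_odd_pow_eq_top ha) ?_ ?_
  · rintro _ ⟨α, -, rfl⟩ _ ⟨β, -, rfl⟩
    simp only [dotProduct, Pi.pow_apply, ← pow_add]
    rw [show 2 * α + (2 * β + 1) = 2 * (α + β) + 1 by ring, hodd]
  · rintro _ ⟨α, hα, rfl⟩
    exact hd α hα

theorem mem_span_odd_pow_sub_of_dotProduct_eq_zero (ha : Function.Injective a)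
    (hodd : ∀ m, ∑ i, a i ^ (2 * m + 1) = 0) (hsq : a ⬝ᵥ a = 1) {d : Fin (2 * p + 2) → K}
    (hd : ∀ α ≤ p, d ⬝ᵥ a ^ (2 * α) = 0) (hda : a ⬝ᵥ d = 0) :
    d ∈ Submodule.span K
      ((fun α => a ^ (2 * α + 1) - (a ⬝ᵥ a ^ (2 * α + 1)) • a) '' Set.Icc 1 p) := by
  have hodd_sub : (fun α => a ^ (2 * α + 1)) '' Set.Iic p ⊆
      insert a ((fun α => a ^ (2 * α + 1)) '' Set.Icc 1 p) := by
    rintro _ ⟨_ | α, hα, rfl⟩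
    · simp
    · exact Or.inr ⟨α + 1, ⟨by omega, hα⟩, rfl⟩
  have hd_odd := mem_span_odd_pow_of_dotProduct_even_pow_eq_zero ha hodd hd
  have h := mem_span_image_sub_smul (dotProductBilin K K a) hsq
    (Submodule.span_mono hodd_sub hd_odd) hda
  rwa [Set.image_image] at h

end Powers

section Trace

variable {R ι : Type*}

theorem trace_mul_diagonal [Fintype ι] [DecidableEq ι] [CommSemiring R] (X : Matrix ι ι R)
    (w : ι → R) :
    trace (X * diagonal w) = X.diag ⬝ᵥ w := by
  simp [trace, dotProduct]

theorem transpose_eq_of_mem_span [CommSemiring R] {s : Set (Matrix ι ι R)}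
    (hs : ∀ M ∈ s, Mᵀ = M) {X : Matrix ι ι R} (hX : X ∈ Submodule.span R s) : Xᵀ = X := by
  induction hX using Submodule.span_induction with
  | mem M hM => exact hs M hM
  | zero => exact transpose_zero
  | add M N _ _ hM hN => rw [transpose_add, hM, hN]
  | smul c M _ hM => rw [transpose_smul, hM]

theorem trace_mul_eq_zero_of_mem_span [Fintype ι] [CommSemiring R] {s : Set (Matrix ι ι R)}
    (B : Matrix ι ι R) (hs : ∀ M ∈ s, trace (M * B) = 0) {X : Matrix ι ι R}
    (hX : X ∈ Submodule.span R s) : trace (X * B) = 0 := by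
  induction hX using Submodule.span_induction with
  | mem M hM => exact hs M hM
  | zero => rw [zero_mul, trace_zero]
  | add M N _ _ hM hN => rw [add_mul, trace_add, hM, hN, add_zero]
  | smul c M _ hM => rw [smul_mul_assoc, trace_smul, hM, smul_zero]

theorem trace_sub_trace_smul_mul_pow [Fintype ι] [DecidableEq ι] [CommRing R]
    (A : Matrix ι ι R) (α k : ℕ) :
    trace ((A ^ (2 * α + 1) - trace (A ^ (2 * α + 2)) • A) * A ^ k) =
      trace (A ^ (2 * α + 1 + k)) - trace (A ^ (2 * α + 2)) * trace (A ^ (k + 1)) := by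
  rw [sub_mul, smul_mul_assoc, ← pow_add, ← pow_succ', trace_sub, trace_smul, smul_eq_mul]

theorem transpose_smul_single_add_single [DecidableEq ι] [CommSemiring R] (c : R) (i j : ι) :
    (c • (single i j (1 : R) + single j i 1))ᵀ = c • (single i j 1 + single j i 1) := by
  rw [transpose_smul, transpose_add, transpose_single, transpose_single, add_comm]

theorem trace_smul_single_add_single_mul_diagonal [Fintype ι] [DecidableEq ι] [CommSemiring R]
    {i j : ι} (hij : i ≠ j) (c : R) (w : ι → R) :
    trace ((c • (single i j (1 : R) + single j i 1)) * diagonal w) = 0 := by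
  rw [trace_mul_diagonal, diag_smul, diag_add, diag_single_of_ne _ _ _ hij,
    diag_single_of_ne _ _ _ hij.symm, add_zero, smul_zero, zero_dotProduct]

theorem two_smul_eq_sum_single_add_single [Fintype ι] [DecidableEq ι] [CommSemiring R]
    {Y : Matrix ι ι R} (hY : Yᵀ = Y) :
    (2 : R) • Y = ∑ i, ∑ j, Y i j • (single i j 1 + single j i 1) := by
  ext k l
  have hlk : Y l k = Y k l := (congr_fun₂ hY l k).symm
  simp [Matrix.sum_apply, single_apply, two_mul, Finset.sum_add_distrib, ite_and, hlk]

theorem mem_tangent_of_mem_span [Fintype ι] [DecidableEq ι] [CommRing R] {p : ℕ} {A : Matrix ι ι R}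
    {s : Set (Matrix ι ι R)}
    (hs : ∀ M ∈ s, Mᵀ = M ∧ ∀ k, (k = 1 ∨ Even k) → trace (M * A ^ k) = 0)
    {X : Matrix ι ι R} (hX : X ∈ Submodule.span R s) :
    Xᵀ = X ∧ trace X = 0 ∧ trace (X * A) = 0 ∧
      ∀ α, 1 ≤ α → α ≤ p → trace (X * A ^ (2 * α)) = 0 := by
  have htr k (hk : k = 1 ∨ Even k) : trace (X * A ^ k) = 0 :=
    trace_mul_eq_zero_of_mem_span _ (fun M hM => (hs M hM).2 k hk) hX
  refine ⟨transpose_eq_of_mem_span (fun M hM => (hs M hM).1) hX, ?_, ?_,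
    fun α _ _ => htr _ (Or.inr (even_two_mul α))⟩
  · simpa using htr 0 (Or.inr Even.zero)
  · simpa using htr 1 (Or.inl rfl)

end Trace

section OffDiagonal

variable {K ι : Type*} [Field K] [LinearOrder ι] {c : K}

theorem single_add_single_mem_span (hc : c ≠ 0) {i j : ι} (hij : i ≠ j) :
    single i j 1 + single j i 1 ∈ Submodule.span K
      {M : Matrix ι ι K | ∃ i j, i < j ∧ M = c • (single i j 1 + single j i 1)} := by
  rw [← inv_smul_smul₀ hc (single i j 1 + single j i 1)]
  refine Submodule.smul_mem _ _ (Submodule.subset_span ?_)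
  rcases hij.lt_or_gt with h | h
  · exact ⟨i, j, h, rfl⟩
  · exact ⟨j, i, h, by rw [add_comm]⟩

theorem sub_diagonal_diag_mem_span [Fintype ι] [CharZero K] {X : Matrix ι ι K} (hX : Xᵀ = X)
    (hc : c ≠ 0) :
    X - diagonal X.diag ∈ Submodule.span K
      {M : Matrix ι ι K | ∃ i j, i < j ∧ M = c • (single i j 1 + single j i 1)} := by
  set Y := X - diagonal X.diag
  have hY : Yᵀ = Y := by rw [transpose_sub, diagonal_transpose, hX]
  rw [← inv_smul_smul₀ (two_ne_zero (α := K)) Y, two_smul_eq_sum_single_add_single hY]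
  refine Submodule.smul_mem _ _
    (Submodule.sum_mem _ fun i _ => Submodule.sum_mem _ fun j _ => ?_)
  rcases eq_or_ne i j with rfl | hij
  · simp [Y]
  · exact Submodule.smul_mem _ _ (single_add_single_mem_span hc hij)

end OffDiagonal

section TangentSpace

variable {p : ℕ} {a : Fin (2 * p + 2) → ℝ}

theorem diagonal_mem_span_sub_of_dotProduct_eq_zero (ha : Function.Injective a)
    (hodd : ∀ m, ∑ i, a i ^ (2 * m + 1) = 0) (hsq : a ⬝ᵥ a = 1) {d : Fin (2 * p + 2) → ℝ}
    (hd : ∀ α ≤ p, d ⬝ᵥ a ^ (2 * α) = 0) (hda : a ⬝ᵥ d = 0) :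
    diagonal d ∈ Submodule.span ℝ {M | ∃ α, 1 ≤ α ∧ α ≤ p ∧
      M = diagonal a ^ (2 * α + 1) - trace (diagonal a ^ (2 * α + 2)) • diagonal a} := by
  have h := Submodule.mem_map_of_mem (f := diagonalLinearMap (Fin (2 * p + 2)) ℝ ℝ)
    (mem_span_odd_pow_sub_of_dotProduct_eq_zero ha hodd hsq hd hda)
  rw [Submodule.map_span, Set.image_image] at h
  refine Submodule.span_mono ?_ h
  rintro _ ⟨α, ⟨hα1, hαp⟩, rfl⟩
  refine ⟨α, hα1, hαp, ?_⟩
  show diagonal (a ^ (2 * α + 1) - (a ⬝ᵥ a ^ (2 * α + 1)) • a) = _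
  rw [diagonal_pow, diagonal_pow, trace_diagonal, ← diagonal_smul, diagonal_sub]
  congr 3
  simp only [dotProduct, Pi.pow_apply, ← pow_succ']

theorem tangent_set_eq_span_of_diagonal (ha : Function.Injective a)
    (hodd : ∀ m, ∑ i, a i ^ (2 * m + 1) = 0) (hsq : ∑ i, a i ^ 2 = 1) :
    {X : Matrix (Fin (2 * p + 2)) (Fin (2 * p + 2)) ℝ |
        Xᵀ = X ∧ trace X = 0 ∧ trace (X * diagonal a) = 0 ∧
          ∀ α, 1 ≤ α → α ≤ p → trace (X * diagonal a ^ (2 * α)) = 0} =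
      ↑(Submodule.span ℝ
        ({M | ∃ i j : Fin (2 * p + 2), i < j ∧
            M = (Real.sqrt 2)⁻¹ • (single i j 1 + single j i 1)} ∪
         {M | ∃ α, 1 ≤ α ∧ α ≤ p ∧
            M = diagonal a ^ (2 * α + 1) - trace (diagonal a ^ (2 * α + 2)) • diagonal a})) := by
  have htrace k : trace (diagonal a ^ k) = ∑ i, a i ^ k := by
    rw [diagonal_pow, trace_diagonal]
    rfl
  ext X
  constructor
  · rintro ⟨hX, h0, h1, heven⟩
    have hd : ∀ α ≤ p, X.diag ⬝ᵥ a ^ (2 * α) = 0 := by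
      rintro (_ | α) hα
      · simpa [dotProduct_one, trace] using h0
      · simpa [diagonal_pow, trace_mul_diagonal] using heven (α + 1) (by omega) hα
    have hda : a ⬝ᵥ X.diag = 0 := by rwa [dotProduct_comm, ← trace_mul_diagonal]
    have hdot : a ⬝ᵥ a = 1 := by simpa [dotProduct, sq] using hsq
    rw [← sub_add_cancel X (diagonal X.diag)]
    exact add_mem
      (Submodule.span_mono Set.subset_union_left (sub_diagonal_diag_mem_span hX (by positivity)))
      (Submodule.span_mono Set.subset_union_right
        (diagonal_mem_span_sub_of_dotProduct_eq_zero ha hodd hdot hd hda))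
  · intro hX
    refine mem_tangent_of_mem_span ?_ hX
    rintro _ (⟨i, j, hij, rfl⟩ | ⟨α, -, -, rfl⟩)
    · refine ⟨transpose_smul_single_add_single _ _ _, fun k _ => ?_⟩
      rw [diagonal_pow]
      exact trace_smul_single_add_single_mul_diagonal hij.ne _ _
    · refine ⟨by simp [transpose_sub, transpose_pow], ?_⟩
      rintro k (rfl | ⟨k, rfl⟩)
      · rw [trace_sub_trace_smul_mul_pow]
        simp [htrace, hsq]
      · rw [trace_sub_trace_smul_mul_pow, show 2 * α + 1 + (k + k) = 2 * (α + k) + 1 by ring,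
          show k + k + 1 = 2 * k + 1 by ring]
        simp only [htrace, hodd, mul_zero, sub_zero]

end TangentSpace

section SignedPairs

variable {R : Type*} [Ring R] {p : ℕ}

def signedPairs (lam : Fin (p + 1) → R) : Fin (2 * p + 2) → R :=
  fun k => (-1 : R) ^ ((k : ℕ) % 2) * lam ⟨(k : ℕ) / 2, Nat.div_lt_of_lt_mul (by omega)⟩

def finProdFinTwoEquiv (p : ℕ) : Fin (p + 1) × Fin 2 ≃ Fin (2 * p + 2) :=
  finProdFinEquiv.trans (finCongr (by ring))

theorem signedPairs_finProdFinTwoEquiv (lam : Fin (p + 1) → R) (i : Fin (p + 1)) (s : Fin 2) :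
    signedPairs lam (finProdFinTwoEquiv p (i, s)) = (-1) ^ (s : ℕ) * lam i := by
  have hs := s.isLt
  simp only [signedPairs, finProdFinTwoEquiv, Equiv.trans_apply, finCongr_apply, Fin.val_cast,
    finProdFinEquiv_apply_val]
  congr 2
  · omega
  · ext
    simp only
    omega

theorem sum_signedPairs {M : Type*} [AddCommMonoid M] (lam : Fin (p + 1) → R) (f : R → M) :
    ∑ k, f (signedPairs lam k) = ∑ i, (f (lam i) + f (-lam i)) := by
  rw [← (finProdFinTwoEquiv p).sum_comp, Fintype.sum_prod_type]
  simp [signedPairs_finProdFinTwoEquiv]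

theorem signedPairs_injective [LinearOrder R] [IsStrictOrderedRing R] {lam : Fin (p + 1) → R}
    (hlam : Function.Injective lam) (hpos : ∀ i, 0 < lam i) :
    Function.Injective (signedPairs lam) := by
  rw [← (finProdFinTwoEquiv p).injective_comp]
  rintro ⟨i, s⟩ ⟨j, t⟩ h
  have hij := add_pos (hpos i) (hpos j)
  simp only [Function.comp_apply, signedPairs_finProdFinTwoEquiv] at h
  fin_cases s <;> fin_cases t <;> simp at h ⊢
  · exact hlam h
  · exact absurd (by rw [h, neg_add_cancel]) hij.ne'
  · exact absurd (by rw [← h, add_neg_cancel]) hij.ne'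
  · exact hlam h

end SignedPairs

/-- tangent space of `B_{n,ℝ}` at a diagonal point, even regular case
`n = 2p+2` with all `λ_i > 0`. -/
theorem tangent_space_even_regular_case (p : ℕ) (lam : Fin (p + 1) → ℝ)
    (hanti : StrictAnti lam) (hpos : ∀ i, 0 < lam i)
    (hsum : 2 * ∑ i, lam i ^ 2 = 1)
    (A : Matrix (Fin (2 * p + 2)) (Fin (2 * p + 2)) ℝ)
    (hA : A = Matrix.diagonal (fun i : Fin (2 * p + 2) =>
      (-1 : ℝ) ^ ((i : ℕ) % 2) * lam ⟨(i : ℕ) / 2, by omega⟩)) :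
    {X : Matrix (Fin (2 * p + 2)) (Fin (2 * p + 2)) ℝ |
        Xᵀ = X ∧ Matrix.trace X = 0 ∧ Matrix.trace (X * A) = 0 ∧
          ∀ α, 1 ≤ α → α ≤ p → Matrix.trace (X * A ^ (2 * α)) = 0} =
      ↑(Submodule.span ℝ
        ({M | ∃ i j : Fin (2 * p + 2), i < j ∧
            M = (Real.sqrt 2)⁻¹ •
              (Matrix.single i j 1 + Matrix.single j i 1)} ∪
         {M | ∃ α, 1 ≤ α ∧ α ≤ p ∧
            M = A ^ (2 * α + 1) - Matrix.trace (A ^ (2 * α + 2)) • A})) := by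
  subst hA
  have hodd m : ∑ i, signedPairs lam i ^ (2 * m + 1) = 0 := by
    rw [sum_signedPairs lam (· ^ (2 * m + 1))]
    simp [Odd.neg_pow ⟨m, rfl⟩]
  have hsq : ∑ i, signedPairs lam i ^ 2 = 1 := by
    rw [sum_signedPairs lam (· ^ 2), ← hsum, two_mul, ← Finset.sum_add_distrib]
    simp
  exact tangent_set_eq_span_of_diagonal (signedPairs_injective hanti.injective hpos) hodd hsq
end

section
/- Let 𝔽 be one of ℝ, ℂ, or the quaternions ℍ, let A₀ = (1/2)·diag(1, −1, 1, −1) ∈ M₄(𝔽), and let C_{4,𝔽} = {P* A₀ P : P ∈ M₄(𝔽), P*P = I₄} be the orbit of A₀ under conjugation by the unitary group over 𝔽. Then the ℝ-linear span of C_{4,𝔽} is the whole real vector space E(4,𝔽); i.e. C_{4,𝔽} is not contained in any real hyperplane of E(4,𝔽) through the origin. -/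
open Matrix

/-- `C_{4,𝔽}`, the orbit of `(1/2)·diag(1,−1,1,−1)` under unitary conjugation over `𝔽`,
spans the whole space `E(4,𝔽)` of traceless Hermitian matrices over `ℝ`. -/
def CSpansE (𝔽 : Type) [Ring 𝔽] [StarRing 𝔽] [Algebra ℝ 𝔽] : Prop :=
  (↑(Submodule.span ℝ
      {B : Matrix (Fin 4) (Fin 4) 𝔽 | ∃ P : Matrix (Fin 4) (Fin 4) 𝔽,
        Pᴴ * P = 1 ∧
        B = Pᴴ * ((1 / 2 : ℝ) • Matrix.diagonal ![1, -1, 1, -1]) * P}) :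
    Set (Matrix (Fin 4) (Fin 4) 𝔽)) =
    {A | Aᴴ = A ∧ Matrix.trace A = 0}

/-!
The real span `S` of the orbit is invariant under unitary conjugation. Subtracting from `A₀` its
conjugate by the transposition of two coordinates with different entries puts `E_aa - E_bb` in `S`
for one pair `a ≠ b`, hence, conjugating by permutation matrices, for all pairs; these span the
real traceless diagonal matrices. Conjugating `E_aa - E_bb` by the rotation through `π/4` in the
`(a, b)`-plane with a unit phase `u` gives `u E_ab + u* E_ba`, and the units span `𝔽` over `ℝ`,
so `S` also contains every Hermitian matrix with zero diagonal. Conversely, unitary conjugation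
preserves Hermitian matrices and, because every element of `𝔽` is normal (so the rows of a
unitary matrix are unit vectors as well as its columns), also the trace of a real diagonal matrix.
-/

theorem Equiv.Perm.exists_apply_eq_and_apply_eq {α : Type*} [DecidableEq α] {a b i j : α}
    (hab : a ≠ b) (hij : i ≠ j) : ∃ σ : Equiv.Perm α, σ a = i ∧ σ b = j := by
  have hi : Equiv.swap a i b ≠ i := by
    simpa only [Equiv.swap_apply_left] using (Equiv.swap a i).injective.ne hab.symm
  refine ⟨Equiv.swap (Equiv.swap a i b) j * Equiv.swap a i, ?_, ?_⟩
  · simp [Equiv.swap_apply_of_ne_of_ne hi.symm hij]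
  · simp

section PlaneRotation

variable {A : Type*} [Ring A] [Algebra ℝ A] {p k z : A}

/-- For an idempotent `p` and `k` with `k * k = -p`, the rotation by `π/4` in the plane `p`. -/
noncomputable def planeRotation (p k : A) : A := 1 - p + (√2)⁻¹ • (p + k)

theorem two_mul_inv_sqrt_two_sq : 2 * (√2)⁻¹ ^ 2 = (1 : ℝ) := by
  rw [inv_pow, Real.sq_sqrt zero_le_two]
  norm_num

theorem planeRotation_neg_mul_planeRotation (hpp : p * p = p) (hpk : p * k = k)
    (hkp : k * p = k) (hkk : k * k = -p) : planeRotation p (-k) * planeRotation p k = 1 := by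
  simp only [planeRotation, mul_add, add_mul, mul_sub, sub_mul, neg_mul, mul_smul_comm,
    smul_mul_assoc, one_mul, mul_one, hpp, hpk, hkp, hkk]
  linear_combination (norm := module) two_mul_inv_sqrt_two_sq • p

theorem planeRotation_neg_mul_mul_planeRotation (hkk : k * k = -p) (hpz : p * z = z)
    (hzp : z * p = z) (hzk : z * k = -(k * z)) :
    planeRotation p (-k) * z * planeRotation p k = z * k := by
  have hkzp : k * z * p = k * z := by rw [mul_assoc, hzp]
  have hkzk : k * z * k = z := by
    rw [mul_assoc, hzk, mul_neg, ← mul_assoc, hkk, neg_mul, neg_neg, hpz]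
  simp only [planeRotation, mul_add, add_mul, mul_sub, sub_mul, neg_mul, mul_smul_comm,
    smul_mul_assoc, one_mul, mul_one, hpz, hzp, hkzp, hkzk]
  rw [hzk]
  linear_combination (norm := module) (-two_mul_inv_sqrt_two_sq) • (k * z)

end PlaneRotation

namespace Matrix

variable {ι 𝔽 : Type*} [DecidableEq ι] [Ring 𝔽]

theorem diagonal_sub_submatrix_swap [Algebra ℝ 𝔽] (d : ι → ℝ) (i j : ι) :
    diagonal (fun k => algebraMap ℝ 𝔽 (d k)) -
        (diagonal fun k => algebraMap ℝ 𝔽 (d k)).submatrix (Equiv.swap i j) (Equiv.swap i j) =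
      (d i - d j) • (single i i 1 - single j j 1) := by
  rw [submatrix_diagonal_equiv]
  ext a b
  simp only [sub_apply, smul_apply, diagonal_apply, single_apply, ite_and, Function.comp_apply,
    Equiv.swap_apply_def]
  split_ifs <;> subst_vars <;> simp_all [Algebra.algebraMap_eq_smul_one, sub_smul]

variable [Fintype ι]

theorem diagonal_mem_of_sum_eq_zero [Algebra ℝ 𝔽] {S : Submodule ℝ (Matrix ι ι 𝔽)}
    (hS : ∀ a b, single a a (1 : 𝔽) - single b b 1 ∈ S) {v : ι → 𝔽}
    (hv : ∀ a, v a ∈ Set.range (algebraMap ℝ 𝔽)) (hsum : ∑ a, v a = 0) : diagonal v ∈ S := by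
  rcases isEmpty_or_nonempty ι with hι | ⟨⟨a₀⟩⟩
  · simp [Subsingleton.elim (diagonal v) 0]
  choose w hw using hv
  have hsingle : ∑ a, single a₀ a₀ (v a) = single a₀ a₀ (∑ a, v a) :=
    (map_sum (singleAddMonoidHom a₀ a₀) v Finset.univ).symm
  have hdiag : diagonal v = ∑ a, w a • (single a a (1 : 𝔽) - single a₀ a₀ 1) := by
    simp only [smul_sub, Finset.sum_sub_distrib, smul_single, ← Algebra.algebraMap_eq_smul_one, hw,
      sum_single_eq_diagonal, hsingle, hsum, single_zero, sub_zero]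
  rw [hdiag]
  exact S.sum_mem fun a _ => S.smul_mem _ (hS a a₀)

variable [StarRing 𝔽]

def unitaryOrbit (D : Matrix ι ι 𝔽) : Set (Matrix ι ι 𝔽) :=
  {B | ∃ P : Matrix ι ι 𝔽, Pᴴ * P = 1 ∧ B = Pᴴ * D * P}

theorem self_mem_unitaryOrbit (D : Matrix ι ι 𝔽) : D ∈ unitaryOrbit D :=
  ⟨1, by simp, by simp⟩

theorem conjTranspose_mul_mul_mem_unitaryOrbit {D X R : Matrix ι ι 𝔽} (hX : X ∈ unitaryOrbit D)
    (hR : Rᴴ * R = 1) : Rᴴ * X * R ∈ unitaryOrbit D := by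
  obtain ⟨P, hP, rfl⟩ := hX
  refine ⟨P * R, ?_, ?_⟩
  · rw [conjTranspose_mul, Matrix.mul_assoc, ← Matrix.mul_assoc Pᴴ, hP, Matrix.one_mul, hR]
  · simp only [conjTranspose_mul, Matrix.mul_assoc]

theorem mem_of_conjTranspose_eq_of_diag_eq_zero [Algebra ℝ 𝔽] {S : Submodule ℝ (Matrix ι ι 𝔽)}
    (hS : ∀ a b, a ≠ b → ∀ x : 𝔽, single a b x + single b a (star x) ∈ S) {M : Matrix ι ι 𝔽}
    (hM : Mᴴ = M) (hdiag : ∀ a, M a a = 0) : M ∈ S := by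
  have hsum : (2 : ℝ) • M = ∑ a, ∑ b, (single a b (M a b) + single b a (star (M a b))) := by
    simp only [Finset.sum_add_distrib, ← conjTranspose_single, ← conjTranspose_sum,
      ← matrix_eq_sum_single, hM, two_smul]
  rw [← inv_smul_smul₀ (two_ne_zero' ℝ) M, hsum]
  refine S.smul_mem _ (S.sum_mem fun a _ => S.sum_mem fun b _ => ?_)
  rcases eq_or_ne a b with rfl | hab
  · simp [hdiag]
  · exact hS a b hab _

theorem trace_conjTranspose_mul_diagonal_mul [Algebra ℝ 𝔽] [∀ x : 𝔽, IsStarNormal x]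
    {P : Matrix ι ι 𝔽} (hP : P * Pᴴ = 1) (d : ι → ℝ) :
    (Pᴴ * diagonal (fun k => algebraMap ℝ 𝔽 (d k)) * P).trace = algebraMap ℝ 𝔽 (∑ k, d k) := by
  calc (Pᴴ * diagonal (fun k => algebraMap ℝ 𝔽 (d k)) * P).trace
      = ∑ i, ∑ k, algebraMap ℝ 𝔽 (d k) * (P k i * star (P k i)) := by
        simp only [trace, diag, mul_apply, diagonal_apply, mul_ite, mul_zero, Finset.sum_ite_eq',
          Finset.mem_univ, if_true, conjTranspose_apply]
        refine Finset.sum_congr rfl fun i _ => Finset.sum_congr rfl fun k _ => ?_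
        rw [← Algebra.commutes, mul_assoc, star_comm_self']
    _ = ∑ k, algebraMap ℝ 𝔽 (d k) * (P * Pᴴ) k k := by
        rw [Finset.sum_comm]
        simp only [mul_apply, conjTranspose_apply, Finset.mul_sum]
    _ = algebraMap ℝ 𝔽 (∑ k, d k) := by simp [hP, map_sum]

variable [Algebra ℝ 𝔽]

def IsUnitarilyInvariant (S : Submodule ℝ (Matrix ι ι 𝔽)) : Prop :=
  ∀ ⦃X⦄, X ∈ S → ∀ ⦃R : Matrix ι ι 𝔽⦄, Rᴴ * R = 1 → Rᴴ * X * R ∈ S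

theorem isUnitarilyInvariant_span_unitaryOrbit (D : Matrix ι ι 𝔽) :
    IsUnitarilyInvariant (Submodule.span ℝ (unitaryOrbit D)) := by
  intro X hX R hR
  let f : Matrix ι ι 𝔽 →ₗ[ℝ] Matrix ι ι 𝔽 := LinearMap.mulLeft ℝ Rᴴ ∘ₗ LinearMap.mulRight ℝ R
  have hle : Submodule.span ℝ (unitaryOrbit D) ≤ (Submodule.span ℝ (unitaryOrbit D)).comap f :=
    Submodule.span_le.2 fun Y hY => by
      simpa [f, Matrix.mul_assoc] using
        Submodule.subset_span (conjTranspose_mul_mul_mem_unitaryOrbit hY hR)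
  simpa [f, Matrix.mul_assoc] using hle hX

namespace IsUnitarilyInvariant

variable {S : Submodule ℝ (Matrix ι ι 𝔽)}

theorem submatrix_mem (hS : IsUnitarilyInvariant S) {X : Matrix ι ι 𝔽} (hX : X ∈ S)
    (σ : Equiv.Perm ι) : X.submatrix σ σ ∈ S := by
  have hσ : (σ⁻¹.permMatrix 𝔽)ᴴ * σ⁻¹.permMatrix 𝔽 = 1 := by
    rw [conjTranspose_permMatrix, ← permMatrix_mul, mul_inv_cancel, permMatrix_one]
  simpa [Matrix.mul_assoc, PEquiv.toMatrix_toPEquiv_mul, PEquiv.mul_toMatrix_toPEquiv,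
    Equiv.Perm.inv_def] using hS hX hσ

theorem single_sub_single_mem (hS : IsUnitarilyInvariant S) {d : ι → ℝ}
    (hD : diagonal (fun k => algebraMap ℝ 𝔽 (d k)) ∈ S) {i j : ι} (hd : d i ≠ d j) (a b : ι) :
    single a a (1 : 𝔽) - single b b 1 ∈ S := by
  have hij : i ≠ j := fun h => hd (congrArg d h)
  have hZ : single i i (1 : 𝔽) - single j j 1 ∈ S := by
    have h := S.smul_mem (d i - d j)⁻¹ (sub_mem hD (hS.submatrix_mem hD (Equiv.swap i j)))
    rwa [diagonal_sub_submatrix_swap, smul_smul, inv_mul_cancel₀ (sub_ne_zero.2 hd),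
      one_smul] at h
  rcases eq_or_ne a b with rfl | hab
  · simp
  obtain ⟨σ, rfl, rfl⟩ := Equiv.Perm.exists_apply_eq_and_apply_eq hab hij
  simpa [submatrix_sub] using hS.submatrix_mem hZ σ

end IsUnitarilyInvariant

variable [StarModule ℝ 𝔽]

variable (ι 𝔽) in
def tracelessHermitian : Submodule ℝ (Matrix ι ι 𝔽) where
  carrier := {A | Aᴴ = A ∧ A.trace = 0}
  add_mem' := fun ⟨ha, ha'⟩ ⟨hb, hb'⟩ =>
    ⟨by rw [conjTranspose_add, ha, hb], by rw [trace_add, ha', hb', add_zero]⟩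
  zero_mem' := ⟨conjTranspose_zero, trace_zero ι 𝔽⟩
  smul_mem' := fun r _ ⟨h, h'⟩ =>
    ⟨by rw [conjTranspose_smul, star_trivial, h], by rw [trace_smul, h', smul_zero]⟩

noncomputable def givensRotation (a b : ι) (u : 𝔽) : Matrix ι ι 𝔽 :=
  planeRotation (single a a 1 + single b b 1) (single a b u - single b a (star u))

theorem conjTranspose_givensRotation (a b : ι) (u : 𝔽) :
    (givensRotation a b u)ᴴ =
      planeRotation (single a a 1 + single b b 1) (-(single a b u - single b a (star u))) := by
  simp only [givensRotation, planeRotation, conjTranspose_add, conjTranspose_sub,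
    conjTranspose_smul, conjTranspose_one, conjTranspose_single, star_one, star_star, star_trivial,
    neg_sub]

theorem conjTranspose_givensRotation_mul_self {a b : ι} (hab : a ≠ b) {u : 𝔽}
    (hu : u ∈ unitary 𝔽) : (givensRotation a b u)ᴴ * givensRotation a b u = 1 := by
  rw [conjTranspose_givensRotation, givensRotation]
  apply planeRotation_neg_mul_planeRotation
  all_goals
    simp only [add_mul, mul_add, sub_mul, mul_sub, single_mul_single_same,
      single_mul_single_of_ne, ne_eq, hab, not_false_eq_true, Ne.symm hab, mul_one, one_mul,
      Unitary.star_mul_self_of_mem hu, Unitary.mul_star_self_of_mem hu]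
    abel

theorem conjTranspose_givensRotation_mul_mul {a b : ι} (hab : a ≠ b) {u : 𝔽}
    (hu : u ∈ unitary 𝔽) :
    (givensRotation a b u)ᴴ * (single a a 1 - single b b 1) * givensRotation a b u =
      single a b u + single b a (star u) := by
  rw [conjTranspose_givensRotation, givensRotation, planeRotation_neg_mul_mul_planeRotation]
  · simp [sub_mul, mul_sub, single_mul_single_same, single_mul_single_of_ne, hab, Ne.symm hab]
  all_goals
    simp only [add_mul, mul_add, sub_mul, mul_sub, single_mul_single_same,
      single_mul_single_of_ne, ne_eq, hab, not_false_eq_true, Ne.symm hab, mul_one, one_mul,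
      Unitary.star_mul_self_of_mem hu, Unitary.mul_star_self_of_mem hu]
    abel

namespace IsUnitarilyInvariant

variable {S : Submodule ℝ (Matrix ι ι 𝔽)}

theorem single_add_single_star_mem (hS : IsUnitarilyInvariant S)
    (hspan : Submodule.span ℝ (unitary 𝔽 : Set 𝔽) = ⊤) {a b : ι} (hab : a ≠ b)
    (hZ : single a a (1 : 𝔽) - single b b 1 ∈ S) (x : 𝔽) :
    single a b x + single b a (star x) ∈ S := by
  have hx : x ∈ Submodule.span ℝ (unitary 𝔽 : Set 𝔽) := hspan ▸ Submodule.mem_top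
  induction hx using Submodule.span_induction with
  | mem u hu =>
    rw [← conjTranspose_givensRotation_mul_mul hab hu]
    exact hS hZ (conjTranspose_givensRotation_mul_self hab hu)
  | zero => simp
  | add x y _ _ hx hy =>
    rw [star_add, single_add, single_add, add_add_add_comm]
    exact add_mem hx hy
  | smul r x _ hx =>
    rw [star_smul, star_trivial, ← smul_single, ← smul_single, ← smul_add]
    exact S.smul_mem r hx

theorem tracelessHermitian_le (hS : IsUnitarilyInvariant S)
    (hreal : ∀ x : 𝔽, IsSelfAdjoint x → x ∈ Set.range (algebraMap ℝ 𝔽))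
    (hspan : Submodule.span ℝ (unitary 𝔽 : Set 𝔽) = ⊤) {d : ι → ℝ}
    (hD : diagonal (fun k => algebraMap ℝ 𝔽 (d k)) ∈ S) {i j : ι} (hd : d i ≠ d j) :
    tracelessHermitian ι 𝔽 ≤ S := by
  rintro A ⟨hA, htr⟩
  have hZ := hS.single_sub_single_mem hD hd
  have hdiag_real : ∀ a, A a a ∈ Set.range (algebraMap ℝ 𝔽) := fun a =>
    hreal _ (IsHermitian.apply hA a a)
  rw [← sub_add_cancel A (diagonal A.diag)]
  refine add_mem (mem_of_conjTranspose_eq_of_diag_eq_zero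
    (fun a b hab => hS.single_add_single_star_mem hspan hab (hZ a b)) ?_ ?_)
    (diagonal_mem_of_sum_eq_zero hZ hdiag_real htr)
  · rw [conjTranspose_sub, hA, diagonal_conjTranspose]
    congr 2
    exact funext fun a => IsHermitian.apply hA a a
  · simp

end IsUnitarilyInvariant

theorem span_unitaryOrbit_diagonal_le [IsStablyFiniteRing 𝔽] [∀ x : 𝔽, IsStarNormal x]
    {d : ι → ℝ} (hd : ∑ k, d k = 0) :
    Submodule.span ℝ (unitaryOrbit (diagonal fun k => algebraMap ℝ 𝔽 (d k))) ≤
      tracelessHermitian ι 𝔽 := by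
  refine Submodule.span_le.2 ?_
  rintro _ ⟨P, hP, rfl⟩
  refine ⟨?_, ?_⟩
  · rw [conjTranspose_mul, conjTranspose_mul, conjTranspose_conjTranspose, diagonal_conjTranspose,
      Matrix.mul_assoc]
    congr 3
    exact funext fun k => (algebraMap_star_comm (d k)).symm.trans (by rw [star_trivial])
  · rw [trace_conjTranspose_mul_diagonal_mul (mul_eq_one_comm.1 hP), hd, map_zero]

theorem span_unitaryOrbit_diagonal_eq [IsStablyFiniteRing 𝔽] [∀ x : 𝔽, IsStarNormal x]
    (hreal : ∀ x : 𝔽, IsSelfAdjoint x → x ∈ Set.range (algebraMap ℝ 𝔽))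
    (hspan : Submodule.span ℝ (unitary 𝔽 : Set 𝔽) = ⊤) {d : ι → ℝ} (hsum : ∑ k, d k = 0)
    {i j : ι} (hd : d i ≠ d j) :
    Submodule.span ℝ (unitaryOrbit (diagonal fun k => algebraMap ℝ 𝔽 (d k))) =
      tracelessHermitian ι 𝔽 :=
  le_antisymm (span_unitaryOrbit_diagonal_le hsum)
    ((isUnitarilyInvariant_span_unitaryOrbit _).tracelessHermitian_le hreal hspan
      (Submodule.subset_span (self_mem_unitaryOrbit _)) hd)

end Matrix

theorem Module.Basis.span_unitary_eq_top {ι 𝔽 : Type*} [Ring 𝔽] [StarRing 𝔽] [Algebra ℝ 𝔽]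
    (b : Module.Basis ι ℝ 𝔽) (hb : ∀ i, b i ∈ unitary 𝔽) :
    Submodule.span ℝ (unitary 𝔽 : Set 𝔽) = ⊤ :=
  eq_top_iff.2 (b.span_eq ▸ Submodule.span_mono (Set.range_subset_iff.2 hb))

theorem Complex.mem_range_algebraMap_of_isSelfAdjoint {z : ℂ} (hz : IsSelfAdjoint z) :
    z ∈ Set.range (algebraMap ℝ ℂ) :=
  ⟨z.re, Complex.conj_eq_iff_re.1 hz⟩

instance : StarModule ℝ (Quaternion ℝ) := ⟨Quaternion.star_smul⟩

theorem Quaternion.mem_range_algebraMap_of_isSelfAdjoint {q : Quaternion ℝ} (hq : IsSelfAdjoint q) :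
    q ∈ Set.range (algebraMap ℝ (Quaternion ℝ)) :=
  ⟨q.re, (Quaternion.star_eq_self.1 hq).symm⟩

theorem Quaternion.mem_unitary_of_normSq_eq_one {q : Quaternion ℝ}
    (hq : Quaternion.normSq q = 1) : q ∈ unitary (Quaternion ℝ) :=
  Unitary.mem_iff.2 ⟨by rw [Quaternion.star_mul_self, hq, Quaternion.coe_one],
    by rw [Quaternion.self_mul_star, hq, Quaternion.coe_one]⟩

theorem Quaternion.span_unitary_eq_top :
    Submodule.span ℝ (unitary (Quaternion ℝ) : Set (Quaternion ℝ)) = ⊤ := by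
  refine eq_top_iff.2 fun q _ => ?_
  rcases eq_or_ne q 0 with rfl | hq
  · exact Submodule.zero_mem _
  have hnorm : ‖q‖ ≠ 0 := norm_ne_zero_iff.2 hq
  have hu : ‖q‖⁻¹ • q ∈ unitary (Quaternion ℝ) := Quaternion.mem_unitary_of_normSq_eq_one <| by
    rw [Quaternion.normSq_smul, Quaternion.normSq_eq_norm_mul_self]
    field_simp
  simpa [smul_smul, hnorm] using Submodule.smul_mem _ ‖q‖ (Submodule.subset_span hu)

theorem cSpansE_of_span_unitary_eq_top {𝔽 : Type} [Ring 𝔽] [StarRing 𝔽] [Algebra ℝ 𝔽]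
    [StarModule ℝ 𝔽] [IsStablyFiniteRing 𝔽] [∀ x : 𝔽, IsStarNormal x]
    (hreal : ∀ x : 𝔽, IsSelfAdjoint x → x ∈ Set.range (algebraMap ℝ 𝔽))
    (hspan : Submodule.span ℝ (unitary 𝔽 : Set 𝔽) = ⊤) : CSpansE 𝔽 := by
  have hA₀ : ((1 / 2 : ℝ) • diagonal ![1, -1, 1, -1] : Matrix (Fin 4) (Fin 4) 𝔽) =
      diagonal fun k => algebraMap ℝ 𝔽 (![1 / 2, -1 / 2, 1 / 2, -1 / 2] k) := by
    rw [← diagonal_smul]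
    congr 1
    ext k
    fin_cases k <;> simp [Algebra.algebraMap_eq_smul_one, neg_div]
  unfold CSpansE
  rw [hA₀]
  exact congrArg SetLike.coe (span_unitaryOrbit_diagonal_eq hreal hspan
    (by simp [Fin.sum_univ_four]; norm_num) (i := 0) (j := 1) (by norm_num))

/-- for `𝔽 = ℝ, ℂ, ℍ`, the orbit `C_{4,𝔽}` is not contained in any real
hyperplane of `E(4,𝔽)` through the origin: its real span is all of `E(4,𝔽)`. -/
theorem C_4_substantial : CSpansE ℝ ∧ CSpansE ℂ ∧ CSpansE (Quaternion ℝ) :=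
  ⟨cSpansE_of_span_unitary_eq_top (fun x _ => ⟨x, rfl⟩)
      ((Module.Basis.singleton (Fin 1) ℝ).span_unitary_eq_top fun _ => by simp),
    cSpansE_of_span_unitary_eq_top (fun _ => Complex.mem_range_algebraMap_of_isSelfAdjoint)
      (Complex.basisOneI.span_unitary_eq_top fun i => by
        fin_cases i <;> simp [Unitary.mem_iff_star_mul_self]),
    cSpansE_of_span_unitary_eq_top (fun _ => Quaternion.mem_range_algebraMap_of_isSelfAdjoint)
      Quaternion.span_unitary_eq_top⟩
end

section
/- Let A be a 4×4 real symmetric matrix with tr A = 0, tr(A²) = 1, and tr(A³) = 0. Then tr(A⁴) ≥ 1/4, and equality holds if and only if A² = (1/4)·I₄ (equivalently, the eigenvalues of A are 1/2, 1/2, −1/2, −1/2, i.e. A = Pᵀ·(1/2)diag(1,1,−1,−1)·P for some orthogonal P; that is, A lies in the critical set C_{4,ℝ}). -/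
/-! Put `B = A² - (1/4)·I₄`, which is symmetric. Then `0 ≤ tr(Bᵀ B) = tr(A⁴) - tr(A²)/2 + 1/4
= tr(A⁴) - 1/4`, and `tr(Bᵀ B) = 0` exactly when `B = 0`. -/

open Matrix

namespace Matrix

variable {n : Type*} [Fintype n] [DecidableEq n]

theorem trace_sq_sub_smul_one {R : Type*} [CommRing R] (B : Matrix n n R) (c : R) :
    trace ((B - c • 1) ^ 2) = trace (B ^ 2) - 2 * c * trace B + c ^ 2 * Fintype.card n := by
  simp only [sq, sub_mul, mul_sub, smul_mul_assoc, mul_smul_comm, one_mul, mul_one, trace_sub,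
    trace_smul, trace_one, smul_eq_mul]
  ring

theorem trace_sq_nonneg_of_transpose_eq {B : Matrix n n ℝ} (hB : Bᵀ = B) :
    0 ≤ trace (B ^ 2) := by
  have := (posSemidef_conjTranspose_mul_self B).trace_nonneg
  rwa [conjTranspose_eq_transpose_of_trivial, hB, ← sq] at this

theorem trace_sq_eq_zero_iff_of_transpose_eq {B : Matrix n n ℝ} (hB : Bᵀ = B) :
    trace (B ^ 2) = 0 ↔ B = 0 := by
  rw [← trace_conjTranspose_mul_self_eq_zero_iff, conjTranspose_eq_transpose_of_trivial, hB, sq]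

theorem trace_pow_four_sub_eq_trace_sq_sub_smul_one (A : Matrix n n ℝ) (c : ℝ) :
    trace (A ^ 4) - (2 * c * trace (A ^ 2) - c ^ 2 * Fintype.card n) =
      trace ((A ^ 2 - c • 1) ^ 2) := by
  rw [trace_sq_sub_smul_one, ← pow_mul]
  ring

theorem two_mul_trace_sq_sub_le_trace_pow_four {A : Matrix n n ℝ} (hA : Aᵀ = A) (c : ℝ) :
    2 * c * trace (A ^ 2) - c ^ 2 * Fintype.card n ≤ trace (A ^ 4) ∧
      (trace (A ^ 4) = 2 * c * trace (A ^ 2) - c ^ 2 * Fintype.card n ↔ A ^ 2 = c • 1) := by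
  have hB : (A ^ 2 - c • 1)ᵀ = A ^ 2 - c • 1 := by
    rw [transpose_sub, transpose_pow, hA, transpose_smul, transpose_one]
  have key := trace_pow_four_sub_eq_trace_sq_sub_smul_one A c
  refine ⟨sub_nonneg.mp (key ▸ trace_sq_nonneg_of_transpose_eq hB), ?_⟩
  rw [← sub_eq_zero, key, trace_sq_eq_zero_iff_of_transpose_eq hB, sub_eq_zero]

end Matrix

theorem trace_pow_four_lower_bound_general (A : Matrix (Fin 4) (Fin 4) ℝ)
    (hAsym : Aᵀ = A) (h2 : Matrix.trace (A ^ 2) = 1) :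
    (1 / 4 : ℝ) ≤ Matrix.trace (A ^ 4) ∧
      (Matrix.trace (A ^ 4) = 1 / 4 ↔
        A ^ 2 = (1 / 4 : ℝ) • (1 : Matrix (Fin 4) (Fin 4) ℝ)) := by
  have hc : 2 * (1 / 4) * trace (A ^ 2) - (1 / 4) ^ 2 * Fintype.card (Fin 4) = (1 / 4 : ℝ) := by
    rw [h2, Fintype.card_fin]
    norm_num
  simpa only [hc] using two_mul_trace_sq_sub_le_trace_pow_four hAsym (1 / 4)

/-- for a traceless unit-norm austere `4×4` real symmetric matrix,
`tr(A⁴) ≥ 1/4`, with equality iff `A² = (1/4)·I₄`. -/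
theorem trace_pow_four_lower_bound (A : Matrix (Fin 4) (Fin 4) ℝ)
    (hAsym : Aᵀ = A) (h1 : Matrix.trace A = 0) (h2 : Matrix.trace (A ^ 2) = 1)
    (h3 : Matrix.trace (A ^ 3) = 0) :
    (1 / 4 : ℝ) ≤ Matrix.trace (A ^ 4) ∧
      (Matrix.trace (A ^ 4) = 1 / 4 ↔
        A ^ 2 = (1 / 4 : ℝ) • (1 : Matrix (Fin 4) (Fin 4) ℝ)) :=
  trace_pow_four_lower_bound_general A hAsym h2
end

section
/- Let A be a 4×4 real symmetric matrix with tr A = 0, tr(A²) = 1, tr(A³) = 0, and A² ≠ (1/4)·I₄. Then the matrix ξ := (A² − (1/4)I₄)/‖A² − (1/4)I₄‖ satisfies ξ² = (1/4)·I₄ and tr ξ = 0; i.e. ξ is orthogonally conjugate to (1/2)·diag(1, 1, −1, −1), so ξ lies in C_{4,ℝ}. (This says that the Gauss image of the hypersurface B̃_{4,ℝ} is C_{4,ℝ}.) -/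
/-!
The eigenvalues `μᵢ` of `A` have power sums `p₁ = 0`, `p₂ = 1`, `p₃ = 0`, so by Newton's
identities `e₁ = 0`, `e₂ = -1/2`, `e₃ = 0`, and every `μᵢ` is a root of `X⁴ - X²/2 + det A`,
i.e. `(μᵢ² - 1/4)² = 1/16 - det A`. Through the functional calculus this gives
`(A² - 1/4)² = (1/16 - det A) • 1`. A nonzero symmetric matrix `M` with `M² = c • 1` has
`‖M‖² = tr M² = 4c`, so `M / ‖M‖` squares to `1/4`; and `tr (A² - 1/4) = 1 - 4 · 1/4 = 0`.
-/

open Matrix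

namespace Matrix.IsHermitian

variable {n 𝕜 : Type*} [RCLike 𝕜] [Fintype n] [DecidableEq n] {A : Matrix n n 𝕜}

theorem trace_cfc (hA : A.IsHermitian) (f : ℝ → ℝ) :
    (cfc f A).trace = ∑ i, (f (hA.eigenvalues i) : 𝕜) := by
  rw [hA.cfc_eq, IsHermitian.cfc, Unitary.conjStarAlgAut_apply, trace_mul_cycle,
    Unitary.coe_star_mul_self, one_mul, trace_diagonal]
  rfl

theorem trace_pow_eq_sum_eigenvalues_pow (hA : A.IsHermitian) (k : ℕ) :
    (A ^ k).trace = ∑ i, (hA.eigenvalues i : 𝕜) ^ k := by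
  rw [← cfc_pow_id (R := ℝ) A k hA.isSelfAdjoint, hA.trace_cfc]
  simp

theorem cfc_eq_smul_one_of_forall_eigenvalues (hA : A.IsHermitian) {f : ℝ → ℝ} {c : ℝ}
    (hf : ∀ i, f (hA.eigenvalues i) = c) : cfc f A = c • 1 := by
  rw [← Algebra.algebraMap_eq_smul_one, ← cfc_const c A hA.isSelfAdjoint]
  refine cfc_congr fun x hx => ?_
  rw [hA.spectrum_real_eq_range_eigenvalues] at hx
  obtain ⟨i, rfl⟩ := hx
  exact hf i

end Matrix.IsHermitian

theorem sq_sub_quarter_sq_zero_eq_of_power_sums {ν : Fin 4 → ℝ} (h1 : ∑ i, ν i = 0)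
    (h2 : ∑ i, ν i ^ 2 = 1) (h3 : ∑ i, ν i ^ 3 = 0) :
    (ν 0 ^ 2 - 1 / 4) ^ 2 = 1 / 16 - ∏ i, ν i := by
  simp only [Fin.sum_univ_four, Fin.prod_univ_four] at *
  set s := ν 0 + ν 1 + ν 2 + ν 3
  -- `∏ (ν 0 - ν i) = 0` rewritten through Newton's identities
  set p := ν 0 ^ 2 + ν 1 ^ 2 + ν 2 ^ 2 + ν 3 ^ 2
  linear_combination (ν 0 ^ 3 - s * ν 0 ^ 2 / 2 + (s ^ 2 - 3 * p) * ν 0 / 6) * h1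
    + (ν 0 ^ 2 / 2) * h2 + (ν 0 / 3) * h3

theorem sq_sub_quarter_sq_eq_of_power_sums {μ : Fin 4 → ℝ} (h1 : ∑ i, μ i = 0)
    (h2 : ∑ i, μ i ^ 2 = 1) (h3 : ∑ i, μ i ^ 3 = 0) (i : Fin 4) :
    (μ i ^ 2 - 1 / 4) ^ 2 = 1 / 16 - ∏ j, μ j := by
  set σ := Equiv.swap 0 i
  have hσ (k : ℕ) : ∑ j, (μ ∘ σ) j ^ k = ∑ j, μ j ^ k := Equiv.sum_comp σ (μ · ^ k)
  have := sq_sub_quarter_sq_zero_eq_of_power_sums (ν := μ ∘ σ)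
    ((Equiv.sum_comp σ μ).trans h1) ((hσ 2).trans h2) ((hσ 3).trans h3)
  simpa [σ, Equiv.prod_comp] using this

theorem sq_sub_quarter_sq_eq_smul_one {A : Matrix (Fin 4) (Fin 4) ℝ} (hA : A.IsHermitian)
    (h1 : A.trace = 0) (h2 : (A ^ 2).trace = 1) (h3 : (A ^ 3).trace = 0) :
    (A ^ 2 - (1 / 4 : ℝ) • 1) ^ 2 = (1 / 16 - A.det) • 1 := by
  rw [← pow_one A, hA.trace_pow_eq_sum_eigenvalues_pow] at h1
  rw [hA.trace_pow_eq_sum_eigenvalues_pow] at h2 h3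
  have hcfc : cfc (fun x : ℝ => (x ^ 2 - 1 / 4) ^ 2) A = (A ^ 2 - (1 / 4 : ℝ) • 1) ^ 2 := by
    have hA' : IsSelfAdjoint A := hA
    rw [cfc_pow (fun x : ℝ => x ^ 2 - 1 / 4) 2 A, cfc_sub (· ^ 2) (fun _ => 1 / 4) A,
      cfc_pow_id A 2, cfc_const (1 / 4 : ℝ) A, Algebra.algebraMap_eq_smul_one]
  rw [← hcfc, hA.det_eq_prod_eigenvalues]
  exact hA.cfc_eq_smul_one_of_forall_eigenvalues <| sq_sub_quarter_sq_eq_of_power_sums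
    (by simpa using h1) (by simpa using h2) (by simpa using h3)

theorem inv_sqrt_trace_smul_sq {n : Type*} [Fintype n] [DecidableEq n] {M : Matrix n n ℝ}
    (hM : Mᵀ = M) (hM0 : M ≠ 0) {c : ℝ} (hc : M ^ 2 = c • 1) :
    ((√(Mᵀ * M).trace)⁻¹ • M) ^ 2 = (Fintype.card n : ℝ)⁻¹ • 1 := by
  have htr : (Mᵀ * M).trace = c * Fintype.card n := by
    rw [hM, ← sq, hc, trace_smul, trace_one, smul_eq_mul]
  have hpos : 0 < (Mᵀ * M).trace := by
    refine lt_of_le_of_ne ?_ (Ne.symm ?_)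
    · simpa using (posSemidef_conjTranspose_mul_self M).trace_nonneg
    · simpa using (trace_conjTranspose_mul_self_eq_zero_iff (A := M)).not.mpr hM0
  obtain ⟨hc0, hn⟩ := mul_ne_zero_iff.mp (htr ▸ hpos.ne')
  rw [smul_pow, hc, smul_smul, inv_pow, Real.sq_sqrt hpos.le, htr]
  congr 1
  field_simp

/-- the Gauss image of `B̃_{4,ℝ}` lies in `C_{4,ℝ}`: the unit normal
`ξ = (A² − (1/4)I)/‖A² − (1/4)I‖` satisfies `ξ² = (1/4)·I₄` and `tr ξ = 0`. -/
theorem gauss_image_in_C4 (A : Matrix (Fin 4) (Fin 4) ℝ)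
    (hAsym : Aᵀ = A) (h1 : Matrix.trace A = 0) (h2 : Matrix.trace (A ^ 2) = 1)
    (h3 : Matrix.trace (A ^ 3) = 0)
    (h4 : A ^ 2 ≠ (1 / 4 : ℝ) • (1 : Matrix (Fin 4) (Fin 4) ℝ))
    (ξ : Matrix (Fin 4) (Fin 4) ℝ)
    (hξ : ξ = (Real.sqrt (Matrix.trace
        ((A ^ 2 - (1 / 4 : ℝ) • (1 : Matrix (Fin 4) (Fin 4) ℝ))ᵀ *
         (A ^ 2 - (1 / 4 : ℝ) • (1 : Matrix (Fin 4) (Fin 4) ℝ)))))⁻¹ •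
      (A ^ 2 - (1 / 4 : ℝ) • (1 : Matrix (Fin 4) (Fin 4) ℝ))) :
    ξ ^ 2 = (1 / 4 : ℝ) • (1 : Matrix (Fin 4) (Fin 4) ℝ) ∧ Matrix.trace ξ = 0 := by
  have hA : A.IsHermitian := (conjTranspose_eq_transpose_of_trivial A).trans hAsym
  have hMsym : (A ^ 2 - (1 / 4 : ℝ) • (1 : Matrix (Fin 4) (Fin 4) ℝ))ᵀ =
      A ^ 2 - (1 / 4 : ℝ) • 1 := by
    rw [transpose_sub, transpose_pow, hAsym, transpose_smul, transpose_one]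
  refine ⟨?_, ?_⟩
  · rw [hξ, inv_sqrt_trace_smul_sq hMsym (sub_ne_zero.mpr h4)
      (sq_sub_quarter_sq_eq_smul_one hA h1 h2 h3)]
    norm_num
  · rw [hξ, trace_smul, trace_sub, h2, trace_smul, trace_one]
    norm_num
end

section
/- Let λ₁ > λ₂ > 0 with 2(λ₁² + λ₂²) = 1 and let A be a 4×4 real symmetric matrix whose eigenvalues are λ₁, −λ₁, λ₂, −λ₂. Set ρ := 3‖A² − (1/4)I₄‖ and T_A := {X a 4×4 real symmetric matrix : tr X = 0, tr(XA) = 0, tr(XA²) = 0}, a 7-dimensional real vector space. Let S : T_A → T_A be the unique linear map with ⟨SX, Y⟩ = −(3/ρ)·(tr(XYA) + tr(XAY)) for all X, Y ∈ T_A, where ⟨X,Y⟩ = tr(XY). Then S has exactly 5 distinct eigenvalues: 3(λ₁+λ₂)/ρ, −3(λ₁+λ₂)/ρ, 3(λ₁−λ₂)/ρ, −3(λ₁−λ₂)/ρ, each with multiplicity 1, and 0 with multiplicity 3. (These are the principal curvatures of the proper Dupin hypersurface B̃_{4,ℝ} of S⁸ at A.) -/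
/-!
Conjugating by the orthogonal matrix `P` we may take `A = diag(λ₁, -λ₁, λ₂, -λ₂)`. Then `T_A` has
the basis formed by the six symmetric matrix units `E_ij + E_ji` (`i ≠ j`), which satisfy
`A X + X A = (λ_i + λ_j) X`, and by `diag(λ₂, -λ₂, -λ₁, λ₁)`, for which `A X + X A` is a
combination of `1` and `A²` and is therefore trace-orthogonal to `T_A`. Since
`⟨S X, Y⟩ = -(3/ρ) tr((A X + X A) Y)` and the trace form is definite on symmetric matrices, these
seven matrices are eigenvectors of `S` with eigenvalues `-(3/ρ)(λ_i + λ_j)` and `0`.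
-/

open Matrix Module End Finset

namespace Matrix

variable {n : Type*} [Fintype n]

theorem eq_zero_of_trace_mul_self_eq_zero {X : Matrix n n ℝ} (hX : Xᵀ = X)
    (h : (X * X).trace = 0) : X = 0 := by
  rw [← trace_conjTranspose_mul_self_eq_zero_iff, conjTranspose_eq_transpose_of_trivial, hX, h]

theorem sqrt_trace_transpose_mul_self_pos {X : Matrix n n ℝ} (hX : X ≠ 0) :
    0 < √(Xᵀ * X).trace := by
  rw [← conjTranspose_eq_transpose_of_trivial]
  exact Real.sqrt_pos.2 <| (posSemidef_conjTranspose_mul_self X).trace_nonneg.lt_of_ne'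
    (mt trace_conjTranspose_mul_self_eq_zero_iff.1 hX)

variable [DecidableEq n]

/-- `X ∈ T_A` in the notation of the paper. -/
def IsTangentAt (A X : Matrix n n ℝ) : Prop :=
  Xᵀ = X ∧ X.trace = 0 ∧ (X * A).trace = 0 ∧ (X * A ^ 2).trace = 0

theorem trace_mul_mul_add_trace_mul_mul_of_anticomm {A X Y : Matrix n n ℝ} {k α β : ℝ}
    (hY : IsTangentAt A Y) (h : A * X + X * A = k • X + α • 1 + β • A ^ 2) :
    (X * Y * A).trace + (X * A * Y).trace = k * (X * Y).trace := by
  obtain ⟨-, htr, -, htr2⟩ := hY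
  calc (X * Y * A).trace + (X * A * Y).trace = ((A * X + X * A) * Y).trace := by
        rw [trace_mul_cycle, add_mul, trace_add, Matrix.mul_assoc]
    _ = k * (X * Y).trace := by
        rw [h]
        simp [add_mul, trace_add, htr, trace_mul_comm (A ^ 2) Y, htr2]

theorem exists_unitary_conjStarAlgAut_eq {P : Matrix n n ℝ} (hP : Pᵀ * P = 1) :
    ∃ u : unitary (Matrix n n ℝ), ∀ X, Unitary.conjStarAlgAut ℝ _ u X = Pᵀ * X * P := by
  have hstar : star Pᵀ = P := by
    rw [star_eq_conjTranspose, conjTranspose_eq_transpose_of_trivial, transpose_transpose]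
  refine ⟨⟨Pᵀ, Unitary.mem_iff.2 ⟨?_, ?_⟩⟩, fun X => ?_⟩
  · rw [hstar, mul_eq_one_comm.1 hP]
  · rw [hstar, hP]
  · exact congrArg (Pᵀ * X * ·) hstar

section conj

variable (u : unitary (Matrix n n ℝ))

local notation "φ" => Unitary.conjStarAlgAut ℝ (Matrix n n ℝ) u

theorem trace_conjStarAlgAut_s16 (X : Matrix n n ℝ) : (φ X).trace = X.trace := by
  rw [Unitary.conjStarAlgAut_apply, trace_mul_cycle, Unitary.coe_star_mul_self, Matrix.one_mul]

theorem transpose_conjStarAlgAut (X : Matrix n n ℝ) : (φ X)ᵀ = φ Xᵀ := by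
  simpa [star_eq_conjTranspose, conjTranspose_eq_transpose_of_trivial] using (map_star φ X).symm

theorem isTangentAt_conjStarAlgAut_iff {A X : Matrix n n ℝ} :
    IsTangentAt (φ A) (φ X) ↔ IsTangentAt A X := by
  simp only [IsTangentAt, transpose_conjStarAlgAut, ← map_mul, ← map_pow, trace_conjStarAlgAut_s16,
    EmbeddingLike.apply_eq_iff_eq]

theorem conjStarAlgAut_anticomm {A X : Matrix n n ℝ} {k α β : ℝ}
    (h : A * X + X * A = k • X + α • 1 + β • A ^ 2) :
    φ A * φ X + φ X * φ A = k • φ X + α • 1 + β • φ A ^ 2 := by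
  simpa only [map_add, map_mul, map_smul, map_one, map_pow] using congrArg φ h

theorem conjStarAlgAut_diagonal_sq_sub_smul_one_ne_zero {d : n → ℝ} {c : ℝ} (i : n)
    (hi : d i ^ 2 ≠ c) : φ (diagonal d) ^ 2 - c • 1 ≠ 0 := by
  rw [← map_pow, ← map_one φ, ← map_smul, ← map_sub, ne_eq, EmbeddingLike.map_eq_zero_iff]
  intro h
  exact hi (by simpa [diagonal_pow, sub_eq_zero] using congrFun (congrFun h i) i)

end conj

section symmSingle

variable {R : Type*} [CommRing R]

def symmSingle (i j : n) : Matrix n n R := single i j 1 + single j i 1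

theorem diagonal_mul_symmSingle_add (d : n → R) (i j : n) :
    diagonal d * symmSingle i j + symmSingle i j * diagonal d = (d i + d j) • symmSingle i j := by
  ext p q
  simp only [symmSingle, mul_add, add_mul, diagonal_mul, mul_diagonal, add_apply, smul_apply,
    single_apply, smul_eq_mul]
  split_ifs <;> grind

end symmSingle

theorem isTangentAt_diagonal_symmSingle (d : n → ℝ) {i j : n} (hij : i ≠ j) :
    IsTangentAt (diagonal d) (symmSingle i j) := by
  refine ⟨?_, ?_, ?_, ?_⟩
  · rw [symmSingle, transpose_add, transpose_single, transpose_single, add_comm]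
  all_goals simp [symmSingle, add_mul, trace_add, trace_single_mul, diagonal_pow, hij, hij.symm]

end Matrix

namespace Module.End

section Eigenbasis

variable {K V ι : Type*} [Field K] [AddCommGroup V] [Module K V] [Fintype ι]
  {f : End K V} (b : Basis ι K V) {μ : ι → K}

theorem repr_apply_of_basis (hb : ∀ i, f (b i) = μ i • b i) (v : V) (i : ι) :
    b.repr (f v) i = μ i * b.repr v i := by
  have hfv : f v = ∑ i, (μ i * b.repr v i) • b i := by
    conv_lhs => rw [← b.sum_repr v, map_sum]
    simp only [map_smul, hb, smul_smul, mul_comm]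
  rw [hfv, b.repr_sum_self]

theorem eigenspace_eq_span_of_basis (hb : ∀ i, f (b i) = μ i • b i) (t : K) :
    f.eigenspace t = Submodule.span K (b '' {i | μ i = t}) := by
  refine le_antisymm (fun v hv => ?_) (Submodule.span_le.2 ?_)
  · rw [b.mem_span_image]
    intro i hi
    have hcoord := repr_apply_of_basis b hb v i
    rw [mem_eigenspace_iff.1 hv, map_smul, Finsupp.smul_apply, smul_eq_mul] at hcoord
    exact (mul_right_cancel₀ (Finsupp.mem_support_iff.1 hi) hcoord).symm
  · rintro _ ⟨i, hi, rfl⟩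
    rw [SetLike.mem_coe, mem_eigenspace_iff, hb, hi]

theorem finrank_eigenspace_of_basis [DecidableEq K] (hb : ∀ i, f (b i) = μ i • b i) (t : K) :
    finrank K (f.eigenspace t) = #{i | μ i = t} := by
  rw [eigenspace_eq_span_of_basis b hb, Set.image_eq_range]
  exact (finrank_span_eq_card (b.linearIndependent.comp _ Subtype.val_injective)).trans
    (Fintype.card_subtype _)

theorem hasEigenvalue_iff_of_basis [DecidableEq ι] (hb : ∀ i, f (b i) = μ i • b i) (t : K) :
    f.HasEigenvalue t ↔ ∃ i, μ i = t := by
  have hf : f = toLin b b (diagonal μ) := b.ext fun i => by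
    simp [toLin_self, diagonal_apply, hb]
  rw [hf, hasEigenvalue_toLin_diagonal_iff]

end Eigenbasis

variable {n : Type*} [Fintype n]

theorem apply_eq_smul_of_forall_trace_mul_eq
    {T : Submodule ℝ (Matrix n n ℝ)} (hT : ∀ X ∈ T, Xᵀ = X) (f : End ℝ T) {x : T} {κ : ℝ}
    (h : ∀ Y : T, ((f x : Matrix n n ℝ) * Y).trace = κ * ((x : Matrix n n ℝ) * Y).trace) :
    f x = κ • x := by
  rw [← sub_eq_zero]
  set w := f x - κ • x
  have hw : ∀ Y : T, ((w : Matrix n n ℝ) * Y).trace = 0 := fun Y => by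
    simp [w, sub_mul, h Y, trace_sub]
  exact Subtype.ext (eq_zero_of_trace_mul_self_eq_zero (hT w w.2) (hw w))

theorem apply_eq_smul_of_anticomm [DecidableEq n] {A : Matrix n n ℝ}
    {T : Submodule ℝ (Matrix n n ℝ)} (hT : ∀ X, X ∈ T ↔ IsTangentAt A X) {S : End ℝ T} {c : ℝ}
    (hS : ∀ X Y : T, ((S X : Matrix n n ℝ) * Y).trace =
      c * (((X : Matrix n n ℝ) * Y * A).trace + ((X : Matrix n n ℝ) * A * Y).trace))
    {x : T} {k α β : ℝ} (hx : A * x + x * A = k • (x : Matrix n n ℝ) + α • 1 + β • A ^ 2) :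
    S x = (c * k) • x :=
  apply_eq_smul_of_forall_trace_mul_eq (fun X hX => ((hT X).1 hX).1) S fun Y => by
    rw [hS, trace_mul_mul_add_trace_mul_mul_of_anticomm ((hT Y).1 Y.2) hx, mul_assoc]

end Module.End

section TangentFrame

variable (l₁ l₂ : ℝ)

def tangentFrame : Fin 7 → Matrix (Fin 4) (Fin 4) ℝ :=
  ![symmSingle 1 3, symmSingle 0 2, symmSingle 1 2, symmSingle 0 3, symmSingle 0 1,
    symmSingle 2 3, diagonal ![l₂, -l₂, -l₁, l₁]]

def frameCurvature : Fin 7 → ℝ := ![-(l₁ + l₂), l₁ + l₂, -(l₁ - l₂), l₁ - l₂, 0, 0, 0]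

theorem isTangentAt_tangentFrame (i : Fin 7) :
    IsTangentAt (diagonal ![l₁, -l₁, l₂, -l₂]) (tangentFrame l₁ l₂ i) := by
  fin_cases i
  pick_goal 7
  · refine ⟨diagonal_transpose _, ?_, ?_, ?_⟩ <;>
      simp [tangentFrame, diagonal_pow, Fin.sum_univ_four, mul_comm]
  all_goals exact isTangentAt_diagonal_symmSingle _ (by decide)

theorem anticomm_tangentFrame (h : l₁ ^ 2 ≠ l₂ ^ 2) (i : Fin 7) :
    ∃ α β : ℝ, diagonal ![l₁, -l₁, l₂, -l₂] * tangentFrame l₁ l₂ i +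
      tangentFrame l₁ l₂ i * diagonal ![l₁, -l₁, l₂, -l₂] =
      frameCurvature l₁ l₂ i • tangentFrame l₁ l₂ i + α • 1 +
        β • diagonal ![l₁, -l₁, l₂, -l₂] ^ 2 := by
  fin_cases i
  pick_goal 7
  -- with `D = diag(l₁, -l₁, l₂, -l₂)` and `X = diag(l₂, -l₂, -l₁, l₁)`,
  -- `D X + X D = 2 l₁ l₂ diag(1, 1, -1, -1)`, a combination of `1` and `D²`
  · have h' : l₁ ^ 2 - l₂ ^ 2 ≠ 0 := sub_ne_zero.2 h
    refine ⟨-2 * l₁ * l₂ * (l₁ ^ 2 + l₂ ^ 2) / (l₁ ^ 2 - l₂ ^ 2),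
      4 * l₁ * l₂ / (l₁ ^ 2 - l₂ ^ 2), ?_⟩
    ext p q
    fin_cases p <;> fin_cases q <;> simp [tangentFrame, frameCurvature, diagonal_pow] <;>
      field_simp <;> ring
  all_goals exact ⟨0, 0, by
    simp [tangentFrame, frameCurvature, diagonal_mul_symmSingle_add] <;> congr 1 <;> ring⟩

theorem linearIndependent_tangentFrame (hl₁ : l₁ ≠ 0) :
    LinearIndependent ℝ (tangentFrame l₁ l₂) := by
  rw [Fintype.linearIndependent_iff]
  intro g hg
  have entry (p q : Fin 4) := congrFun (congrFun hg p) q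
  simp only [tangentFrame, symmSingle, Fin.sum_univ_seven, cons_val_zero, cons_val_one,
    Matrix.cons_val, smul_add, smul_single, smul_eq_mul, mul_one, Matrix.add_apply,
    Matrix.single_apply, Matrix.smul_apply, Matrix.zero_apply] at entry
  intro i
  fin_cases i
  exacts [by simpa using entry 1 3, by simpa using entry 0 2, by simpa using entry 1 2,
    by simpa using entry 0 3, by simpa using entry 0 1, by simpa using entry 2 3,
    by simpa [hl₁] using entry 3 3]

theorem diag_eq_of_isTangentAt (hl₁ : l₁ ≠ 0) (h : l₁ ^ 2 ≠ l₂ ^ 2)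
    {N : Matrix (Fin 4) (Fin 4) ℝ} (hN : IsTangentAt (diagonal ![l₁, -l₁, l₂, -l₂]) N) :
    ∃ c : ℝ, N.diag = c • ![l₂, -l₂, -l₁, l₁] := by
  obtain ⟨-, h₀, h₁, h₂⟩ := hN
  replace h₀ : N 0 0 + N 1 1 + N 2 2 + N 3 3 = 0 := by simpa [trace, Fin.sum_univ_four] using h₀
  replace h₁ : l₁ * (N 0 0 - N 1 1) + l₂ * (N 2 2 - N 3 3) = 0 := by
    simp [trace, Fin.sum_univ_four] at h₁
    linear_combination h₁
  replace h₂ : l₁ ^ 2 * (N 0 0 + N 1 1) + l₂ ^ 2 * (N 2 2 + N 3 3) = 0 := by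
    simp [trace, Fin.sum_univ_four, diagonal_pow] at h₂
    linear_combination h₂
  have h' : l₁ ^ 2 - l₂ ^ 2 ≠ 0 := sub_ne_zero.2 h
  have hsum : N 0 0 + N 1 1 = 0 := by
    apply (mul_eq_zero.1 _).resolve_left h'
    linear_combination h₂ - l₂ ^ 2 * h₀
  have hce : N 2 2 + N 3 3 = 0 := by linear_combination h₀ - hsum
  have hdiag : l₁ * N 0 0 = l₂ * N 3 3 := by
    linear_combination h₁ / 2 + l₁ / 2 * hsum - l₂ / 2 * hce
  refine ⟨N 3 3 / l₁, ?_⟩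
  ext i
  fin_cases i <;> simp <;> field_simp
  · linear_combination hdiag
  · linear_combination l₁ * hsum - hdiag
  · linear_combination hce

theorem mem_span_tangentFrame (hl₁ : l₁ ≠ 0) (h : l₁ ^ 2 ≠ l₂ ^ 2) {N : Matrix (Fin 4) (Fin 4) ℝ}
    (hN : IsTangentAt (diagonal ![l₁, -l₁, l₂, -l₂]) N) :
    N ∈ Submodule.span ℝ (Set.range (tangentFrame l₁ l₂)) := by
  obtain ⟨c, hc⟩ := diag_eq_of_isTangentAt l₁ l₂ hl₁ h hN
  have hdiag (i : Fin 4) : N i i = c * ![l₂, -l₂, -l₁, l₁] i := congrFun hc i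
  have hsymm (p q : Fin 4) : N q p = N p q := congrFun (congrFun hN.1 p) q
  rw [Submodule.mem_span_range_iff_exists_fun]
  refine ⟨![N 1 3, N 0 2, N 1 2, N 0 3, N 0 1, N 2 3, c], ?_⟩
  ext p q
  fin_cases p <;> fin_cases q <;> simp [Fin.sum_univ_seven, tangentFrame, symmSingle, hdiag]
  all_goals exact hsymm _ _

theorem exists_basis_conjStarAlgAut_tangentFrame (hl₁ : l₁ ≠ 0) (h : l₁ ^ 2 ≠ l₂ ^ 2)
    (u : unitary (Matrix (Fin 4) (Fin 4) ℝ)) {T : Submodule ℝ (Matrix (Fin 4) (Fin 4) ℝ)}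
    (hT : ∀ X, X ∈ T ↔
      IsTangentAt (Unitary.conjStarAlgAut ℝ _ u (diagonal ![l₁, -l₁, l₂, -l₂])) X) :
    ∃ b : Basis (Fin 7) ℝ T, ∀ i,
      (b i : Matrix (Fin 4) (Fin 4) ℝ) = Unitary.conjStarAlgAut ℝ _ u (tangentFrame l₁ l₂ i) := by
  set φ := Unitary.conjStarAlgAut ℝ (Matrix (Fin 4) (Fin 4) ℝ) u
  have hmem (i : Fin 7) : φ (tangentFrame l₁ l₂ i) ∈ T :=
    (hT _).2 ((isTangentAt_conjStarAlgAut_iff u).2 (isTangentAt_tangentFrame l₁ l₂ i))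
  let v (i : Fin 7) : T := ⟨_, hmem i⟩
  have hli : LinearIndependent ℝ v := LinearIndependent.of_comp T.subtype <|
    (linearIndependent_tangentFrame l₁ l₂ hl₁).map' φ.toAlgEquiv.toLinearEquiv.toLinearMap
      (LinearEquiv.ker _)
  have hsp : ⊤ ≤ Submodule.span ℝ (Set.range v) := by
    rintro x -
    have hx : IsTangentAt (diagonal ![l₁, -l₁, l₂, -l₂]) (φ.symm x) := by
      rw [← isTangentAt_conjStarAlgAut_iff u, StarAlgEquiv.apply_symm_apply]
      exact (hT _).1 x.2
    obtain ⟨c, hc⟩ := (Submodule.mem_span_range_iff_exists_fun ℝ).1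
      (mem_span_tangentFrame l₁ l₂ hl₁ h hx)
    refine (Submodule.mem_span_range_iff_exists_fun ℝ).2 ⟨c, Subtype.ext ?_⟩
    simpa [v, map_sum] using congrArg φ hc
  exact ⟨Basis.mk hli hsp, fun i => by rw [Basis.mk_apply]⟩

end TangentFrame

def principalCurvatures (a b : ℝ) : Fin 7 → ℝ := ![a, -a, b, -b, 0, 0, 0]

theorem exists_principalCurvatures_eq_iff (a b t : ℝ) :
    (∃ i, principalCurvatures a b i = t) ↔ t = a ∨ t = -a ∨ t = b ∨ t = -b ∨ t = 0 := by
  simp [principalCurvatures, Fin.exists_fin_succ, eq_comm]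

theorem card_principalCurvatures_eq {a b : ℝ} (hb : 0 < b) (hab : b < a) :
    #{i | principalCurvatures a b i = a} = 1 ∧ #{i | principalCurvatures a b i = -a} = 1 ∧
      #{i | principalCurvatures a b i = b} = 1 ∧ #{i | principalCurvatures a b i = -b} = 1 ∧
      #{i | principalCurvatures a b i = 0} = 3 := by
  have ha : 0 < a := hb.trans hab
  unfold principalCurvatures
  simp only [card_filter, Fin.sum_univ_seven]
  refine ⟨?_, ?_, ?_, ?_, ?_⟩ <;>
    simp [ha.ne, ha.ne', hb.ne, hb.ne', hab.ne, hab.ne', eq_neg_iff_add_eq_zero,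
      neg_eq_iff_add_eq_zero, neg_add_eq_sub, sub_eq_zero, (add_pos ha hb).ne', (add_pos hb ha).ne']

/-- principal curvatures of the proper Dupin hypersurface `B̃_{4,ℝ}`:
the shape operator on the 7-dimensional tangent space has exactly the 5 distinct
eigenvalues `±3(λ₁+λ₂)/ρ`, `±3(λ₁−λ₂)/ρ`, `0`, with multiplicities `1,1,1,1,3`. -/
theorem shape_operator_eigenvalues_B4 (lam1 lam2 : ℝ)
    (hlt : lam2 < lam1) (hpos : 0 < lam2)
    (hsum : 2 * (lam1 ^ 2 + lam2 ^ 2) = 1)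
    (A : Matrix (Fin 4) (Fin 4) ℝ)
    (hA : ∃ P : Matrix (Fin 4) (Fin 4) ℝ, Pᵀ * P = 1 ∧
      A = Pᵀ * Matrix.diagonal ![lam1, -lam1, lam2, -lam2] * P)
    (ρ : ℝ)
    (hρ : ρ = 3 * Real.sqrt (Matrix.trace
      ((A ^ 2 - (1 / 4 : ℝ) • (1 : Matrix (Fin 4) (Fin 4) ℝ))ᵀ *
       (A ^ 2 - (1 / 4 : ℝ) • (1 : Matrix (Fin 4) (Fin 4) ℝ)))))
    (T : Submodule ℝ (Matrix (Fin 4) (Fin 4) ℝ))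
    (hT : ∀ X, X ∈ T ↔ (Xᵀ = X ∧ Matrix.trace X = 0 ∧ Matrix.trace (X * A) = 0 ∧
      Matrix.trace (X * A ^ 2) = 0))
    (S : Module.End ℝ T)
    (hS : ∀ X Y : T, Matrix.trace ((S X : Matrix (Fin 4) (Fin 4) ℝ) * (Y : Matrix (Fin 4) (Fin 4) ℝ)) =
      -(3 / ρ) * (Matrix.trace ((X : Matrix (Fin 4) (Fin 4) ℝ) * (Y : Matrix (Fin 4) (Fin 4) ℝ) * A) +
        Matrix.trace ((X : Matrix (Fin 4) (Fin 4) ℝ) * A * (Y : Matrix (Fin 4) (Fin 4) ℝ)))) :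
    Module.finrank ℝ T = 7 ∧
    (∀ μ : ℝ, S.HasEigenvalue μ ↔
      (μ = 3 * (lam1 + lam2) / ρ ∨ μ = -(3 * (lam1 + lam2) / ρ) ∨
       μ = 3 * (lam1 - lam2) / ρ ∨ μ = -(3 * (lam1 - lam2) / ρ) ∨ μ = 0)) ∧
    Module.finrank ℝ (Module.End.eigenspace S (3 * (lam1 + lam2) / ρ)) = 1 ∧
    Module.finrank ℝ (Module.End.eigenspace S (-(3 * (lam1 + lam2) / ρ))) = 1 ∧
    Module.finrank ℝ (Module.End.eigenspace S (3 * (lam1 - lam2) / ρ)) = 1 ∧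
    Module.finrank ℝ (Module.End.eigenspace S (-(3 * (lam1 - lam2) / ρ))) = 1 ∧
    Module.finrank ℝ (Module.End.eigenspace S 0) = 3 := by
  obtain ⟨P, hP, rfl⟩ := hA
  obtain ⟨u, hu⟩ := exists_unitary_conjStarAlgAut_eq hP
  rw [← hu] at hρ hT hS
  have hl₁ : lam1 ≠ 0 := (hpos.trans hlt).ne'
  have hsq : lam1 ^ 2 ≠ lam2 ^ 2 := by nlinarith
  obtain ⟨b, hb⟩ := exists_basis_conjStarAlgAut_tangentFrame lam1 lam2 hl₁ hsq u hT
  have hρpos : 0 < ρ := hρ ▸ mul_pos three_pos (sqrt_trace_transpose_mul_self_pos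
    (conjStarAlgAut_diagonal_sq_sub_smul_one_ne_zero u 0 (show lam1 ^ 2 ≠ 1 / 4 by nlinarith)))
  have hSb (i : Fin 7) :
      S (b i) = principalCurvatures (3 * (lam1 + lam2) / ρ) (3 * (lam1 - lam2) / ρ) i • b i := by
    obtain ⟨α, β, h⟩ := anticomm_tangentFrame lam1 lam2 hsq i
    rw [apply_eq_smul_of_anticomm hT hS (by rw [hb]; exact conjStarAlgAut_anticomm u h)]
    congr 1
    fin_cases i <;> simp [frameCurvature, principalCurvatures] <;> ring
  obtain ⟨h₁, h₂, h₃, h₄, h₀⟩ := card_principalCurvatures_eq (a := 3 * (lam1 + lam2) / ρ)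
    (b := 3 * (lam1 - lam2) / ρ) (div_pos (by linarith) hρpos) (by gcongr; linarith)
  simp only [finrank_eigenspace_of_basis b hSb]
  exact ⟨(finrank_eq_card_basis b).trans (Fintype.card_fin 7),
    fun t => (hasEigenvalue_iff_of_basis b hSb t).trans (exists_principalCurvatures_eq_iff _ _ t),
    h₁, h₂, h₃, h₄, h₀⟩
end

section
/- Let A = (1/2)·diag(1, 1, −1, −1) ∈ M₄(ℂ). For every matrix ξ ∈ M₄(ℂ) of the block-diagonal form ξ = diag(ξ₁, ξ₂), where ξ₁ and ξ₂ are 2×2 complex Hermitian matrices each with trace 0, there exists a unitary matrix P ∈ U(4) such that P*AP = A and P*ξP = −ξ. (Such ξ are exactly the normal vectors to the orbit C_{4,ℂ} at A inside the unit sphere; this reflection property is the key step proving that C_{4,ℂ} is an austere submanifold.) -/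
/-!
Block-diagonal unitaries commute with `A`, so it suffices to reflect each traceless Hermitian
`2 × 2` block separately. Such a block is `ξ = [[a, b], [b̄, -a]]`, and the unitary
`[[0, 1], [v, 0]]` with `|v| = 1` and `v b = -b̄` conjugates it to `-ξ`.
-/

open Matrix

section StarField

variable {K : Type*} [Field K] [StarRing K]

theorem exists_star_mul_self_eq_one_and_mul_eq_neg_star (b : K) :
    ∃ v : K, star v * v = 1 ∧ v * b = -star b := by
  rcases eq_or_ne b 0 with rfl | hb
  · exact ⟨1, by simp⟩
  · have hb' : star b ≠ 0 := star_ne_zero.mpr hb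
    refine ⟨-star b / b, ?_, ?_⟩
    · rw [star_div₀, star_neg, star_star]
      field_simp
    · field_simp

theorem Matrix.IsHermitian.eq_of_trace_eq_zero_fin_two {ξ : Matrix (Fin 2) (Fin 2) K}
    (hξ : ξ.IsHermitian) (ht : ξ.trace = 0) :
    ξ = !![ξ 0 0, ξ 0 1; star (ξ 0 1), -ξ 0 0] := by
  have h₁₀ : ξ 1 0 = star (ξ 0 1) := (hξ.apply 1 0).symm
  have h₁₁ : ξ 1 1 = -ξ 0 0 := by
    rw [trace_fin_two] at ht
    exact eq_neg_of_add_eq_zero_right ht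
  rw [← h₁₀, ← h₁₁]
  exact eta_fin_two ξ

theorem conjTranspose_antidiag_mul_mul_antidiag (a b v : K) (hv : star v * v = 1)
    (hvb : v * b = -star b) :
    (!![0, 1; v, 0])ᴴ * !![a, b; star b, -a] * !![0, 1; v, 0] = -!![a, b; star b, -a] := by
  have hvb' : star v * star b = -b := by rw [← star_mul', hvb, star_neg, star_star]
  ext i j
  fin_cases i <;> fin_cases j <;>
    simp [mul_apply, Fin.sum_univ_two, mul_right_comm (star v) a, hv, hvb', mul_comm b v, hvb]

theorem exists_unitary_conj_eq_neg_of_isHermitian_of_trace_eq_zero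
    {ξ : Matrix (Fin 2) (Fin 2) K} (hξ : ξ.IsHermitian) (ht : ξ.trace = 0) :
    ∃ U : Matrix (Fin 2) (Fin 2) K, Uᴴ * U = 1 ∧ Uᴴ * ξ * U = -ξ := by
  obtain ⟨v, hv, hvb⟩ := exists_star_mul_self_eq_one_and_mul_eq_neg_star (ξ 0 1)
  refine ⟨!![0, 1; v, 0], ?_, ?_⟩
  · ext i j
    fin_cases i <;> fin_cases j <;> simp [mul_apply, hv]
  · rw [hξ.eq_of_trace_eq_zero_fin_two ht]
    exact conjTranspose_antidiag_mul_mul_antidiag _ _ _ hv hvb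

end StarField

section Blocks

variable {m n α : Type*} [Fintype m] [Fintype n] [NonUnitalNonAssocSemiring α] [StarRing α]

theorem Matrix.conjTranspose_fromBlocks_diag_mul_mul (U₁ A₁ : Matrix m m α) (U₂ A₂ : Matrix n n α) :
    (fromBlocks U₁ 0 0 U₂)ᴴ * fromBlocks A₁ 0 0 A₂ * fromBlocks U₁ 0 0 U₂ =
      fromBlocks (U₁ᴴ * A₁ * U₁) 0 0 (U₂ᴴ * A₂ * U₂) := by
  simp [fromBlocks_conjTranspose, fromBlocks_multiply]

end Blocks

theorem Matrix.conjTranspose_mul_smul_one_mul {n α : Type*} [Fintype n] [DecidableEq n]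
    [CommSemiring α] [StarRing α] {U : Matrix n n α} (hU : Uᴴ * U = 1) (c : α) :
    Uᴴ * (c • 1) * U = c • 1 := by
  rw [mul_smul_one, smul_mul, hU]

/-- for every normal direction `ξ = diag(ξ₁, ξ₂)` (with `ξ₁, ξ₂`
traceless Hermitian `2×2` blocks) at `A = (1/2)·diag(1,1,−1,−1)`, there is a unitary
`P` fixing `A` under conjugation and sending `ξ` to `−ξ`. -/
theorem normal_reflection_C4C (ξ₁ ξ₂ : Matrix (Fin 2) (Fin 2) ℂ)
    (h₁ : ξ₁ᴴ = ξ₁) (h₂ : ξ₂ᴴ = ξ₂)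
    (ht₁ : Matrix.trace ξ₁ = 0) (ht₂ : Matrix.trace ξ₂ = 0) :
    ∃ P : Matrix (Fin 2 ⊕ Fin 2) (Fin 2 ⊕ Fin 2) ℂ,
      Pᴴ * P = 1 ∧
      Pᴴ * (Matrix.fromBlocks ((1 / 2 : ℂ) • 1) 0 0 (-((1 / 2 : ℂ) • 1))) * P =
        Matrix.fromBlocks ((1 / 2 : ℂ) • 1) 0 0 (-((1 / 2 : ℂ) • 1)) ∧
      Pᴴ * (Matrix.fromBlocks ξ₁ 0 0 ξ₂) * P = -(Matrix.fromBlocks ξ₁ 0 0 ξ₂) := by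
  obtain ⟨U₁, hU₁, hξ₁⟩ := exists_unitary_conj_eq_neg_of_isHermitian_of_trace_eq_zero h₁ ht₁
  obtain ⟨U₂, hU₂, hξ₂⟩ := exists_unitary_conj_eq_neg_of_isHermitian_of_trace_eq_zero h₂ ht₂
  refine ⟨fromBlocks U₁ 0 0 U₂, ?_, ?_, ?_⟩
  · have h := conjTranspose_fromBlocks_diag_mul_mul U₁ 1 U₂ 1
    rwa [fromBlocks_one, Matrix.mul_one, Matrix.mul_one, Matrix.mul_one, hU₁, hU₂,
      fromBlocks_one] at h
  · rw [conjTranspose_fromBlocks_diag_mul_mul, mul_neg, neg_mul,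
      conjTranspose_mul_smul_one_mul hU₁, conjTranspose_mul_smul_one_mul hU₂]
  · rw [conjTranspose_fromBlocks_diag_mul_mul, hξ₁, hξ₂, fromBlocks_neg, neg_zero]
end

section
/- Let m₁ and m₂ be q×q real symmetric matrices. Then the 2q×2q real symmetric matrix M = [[m₁, m₂],[m₂, −m₁]] (in 2×2 block form) is austere: tr(M^{2k+1}) = 0 for every integer k ≥ 0. Hence the space of all such matrices M is an austere subspace of the 2q×2q real symmetric matrices of dimension q(q+1). -/
/-!
Conjugation by the complex structure `J = [[0, 1], [-1, 0]]` sends `[[m₁, m₂], [m₂, -m₁]]` to its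
negative, so every odd power of it has trace equal to minus itself. The block matrices are the
injective linear image of pairs of symmetric matrices, and symmetric `q × q` matrices are
parametrised by functions on `Sym2 (Fin q)`, a set of `q(q+1)/2` elements.
-/

open Matrix

namespace Matrix

variable {R n : Type*}

section Trace

variable [Fintype n] [DecidableEq n]

theorem trace_pow_eq_zero_of_conj_eq_neg [CommRing R] [NoZeroDivisors R] [CharZero R]
    (U : (Matrix n n R)ˣ) {M : Matrix n n R} (hU : U * M * (↑U⁻¹ : Matrix n n R) = -M)
    {k : ℕ} (hk : Odd k) : trace (M ^ k) = 0 := by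
  have h := trace_units_conj U (M ^ k)
  rw [← Units.conj_pow, hU, hk.neg_pow, trace_neg] at h
  exact CharZero.neg_eq_self_iff.mp h

def blockRotation [Ring R] : (Matrix (n ⊕ n) (n ⊕ n) R)ˣ where
  val := fromBlocks 0 1 (-1) 0
  inv := fromBlocks 0 (-1) 1 0
  val_inv := by simp [fromBlocks_multiply, fromBlocks_one]
  inv_val := by simp [fromBlocks_multiply, fromBlocks_one]

theorem blockRotation_conj_fromBlocks [Ring R] (a b : Matrix n n R) :
    let J : (Matrix (n ⊕ n) (n ⊕ n) R)ˣ := blockRotation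
    J * fromBlocks a b b (-a) * (↑J⁻¹ : Matrix (n ⊕ n) (n ⊕ n) R) = -fromBlocks a b b (-a) := by
  simp [blockRotation, fromBlocks_multiply, fromBlocks_neg]

theorem trace_fromBlocks_neg_pow_eq_zero_of_odd [CommRing R] [NoZeroDivisors R] [CharZero R]
    (a b : Matrix n n R) {k : ℕ} (hk : Odd k) : trace (fromBlocks a b b (-a) ^ k) = 0 :=
  trace_pow_eq_zero_of_conj_eq_neg _ (blockRotation_conj_fromBlocks a b) hk

end Trace

section Dimension

def ofSym2 [CommSemiring R] : (Sym2 n → R) →ₗ[R] Matrix n n R where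
  toFun f := of fun i j => f s(i, j)
  map_add' _ _ := rfl
  map_smul' _ _ := rfl

@[simp] theorem ofSym2_apply [CommSemiring R] (f : Sym2 n → R) (i j : n) :
    ofSym2 f i j = f s(i, j) :=
  rfl

theorem ofSym2_injective [CommSemiring R] :
    Function.Injective (ofSym2 : (Sym2 n → R) → Matrix n n R) := by
  intro f g h
  funext z
  induction z using Sym2.ind with
  | h i j => exact congrFun (congrFun h i) j

theorem exists_ofSym2_eq_iff [CommSemiring R] {A : Matrix n n R} :
    (∃ f, ofSym2 f = A) ↔ Aᵀ = A := by
  constructor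
  · rintro ⟨f, rfl⟩
    ext i j
    simp [Sym2.eq_swap]
  · intro hA
    exact ⟨Sym2.lift ⟨A, fun i j => (congrFun (congrFun hA i) j).symm⟩, rfl⟩

variable (R n) in
def bryantBlockₗ [CommRing R] : (Matrix n n R × Matrix n n R) →ₗ[R] Matrix (n ⊕ n) (n ⊕ n) R where
  toFun p := fromBlocks p.1 p.2 p.2 (-p.1)
  map_add' p p' := by simp [fromBlocks_add, add_comm]
  map_smul' c p := by simp [fromBlocks_smul]

theorem bryantBlockₗ_injective [CommRing R] : Function.Injective (bryantBlockₗ R n) := by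
  intro p p' h
  exact Prod.ext (congrArg toBlocks₁₁ h) (congrArg toBlocks₁₂ h)

theorem range_bryantBlockₗ_comp_ofSym2 [CommRing R] :
    (LinearMap.range ((bryantBlockₗ R n).comp (ofSym2.prodMap ofSym2)) : Set _) =
      {M | ∃ a b : Matrix n n R, aᵀ = a ∧ bᵀ = b ∧ M = fromBlocks a b b (-a)} := by
  ext M
  simp only [LinearMap.coe_range, Set.mem_range, Set.mem_ofPred_eq, Prod.exists,
    LinearMap.comp_apply, LinearMap.prodMap_apply, ← exists_ofSym2_eq_iff]
  constructor
  · rintro ⟨f, g, rfl⟩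
    exact ⟨_, _, ⟨f, rfl⟩, ⟨g, rfl⟩, rfl⟩
  · rintro ⟨_, _, ⟨f, rfl⟩, ⟨g, rfl⟩, rfl⟩
    exact ⟨f, g, rfl⟩

theorem finrank_span_fromBlocks_symm [Fintype n] [Field R] :
    Module.finrank R (Submodule.span R
      {M | ∃ a b : Matrix n n R, aᵀ = a ∧ bᵀ = b ∧ M = fromBlocks a b b (-a)}) =
      2 * Fintype.card (Sym2 n) := by
  have hinj : Function.Injective ((bryantBlockₗ R n).comp (ofSym2.prodMap ofSym2)) :=
    bryantBlockₗ_injective.comp (ofSym2_injective.prodMap ofSym2_injective)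
  rw [← range_bryantBlockₗ_comp_ofSym2, Submodule.span_eq, LinearMap.finrank_range_of_inj hinj,
    Module.finrank_prod, Module.finrank_fintype_fun_eq_card, two_mul]

end Dimension

end Matrix

theorem two_mul_card_sym2_fin (q : ℕ) : 2 * Fintype.card (Sym2 (Fin q)) = q * (q + 1) := by
  rw [Sym2.card, Fintype.card_fin, Nat.choose_two_right, Nat.add_sub_cancel, mul_comm (q + 1),
    Nat.mul_div_cancel' (Nat.even_mul_succ_self q).two_dvd]

/-- Bryant's construction: for symmetric `m₁, m₂`, the block matrix
`[[m₁, m₂], [m₂, −m₁]]` is austere, and the space of all such matrices is an austere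
subspace of dimension `q(q+1)`. -/
theorem bryant_block_construction_austere (q : ℕ) :
    (∀ m₁ m₂ : Matrix (Fin q) (Fin q) ℝ, m₁ᵀ = m₁ → m₂ᵀ = m₂ →
      ∀ k : ℕ, Matrix.trace ((Matrix.fromBlocks m₁ m₂ m₂ (-m₁)) ^ (2 * k + 1)) = 0) ∧
    Module.finrank ℝ (Submodule.span ℝ
      {M : Matrix (Fin q ⊕ Fin q) (Fin q ⊕ Fin q) ℝ |
        ∃ m₁ m₂ : Matrix (Fin q) (Fin q) ℝ, m₁ᵀ = m₁ ∧ m₂ᵀ = m₂ ∧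
          M = Matrix.fromBlocks m₁ m₂ m₂ (-m₁)}) = q * (q + 1) :=
  ⟨fun m₁ m₂ _ _ k => trace_fromBlocks_neg_pow_eq_zero_of_odd m₁ m₂ (odd_two_mul_add_one k),
    finrank_span_fromBlocks_symm.trans (two_mul_card_sym2_fin q)⟩
end

section
/- Let m be a q×q real matrix and λ ∈ ℝ. Then the 2q×2q real symmetric matrix M = [[λI_q, m],[mᵀ, −λI_q]] (in 2×2 block form) is austere: tr(M^{2k+1}) = 0 for every integer k ≥ 0. Hence the space of all such matrices M is an austere subspace of the 2q×2q real symmetric matrices of dimension q² + 1. -/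
/-!
Squaring `M = [[λ, B], [C, -λ]]` kills the off-diagonal blocks, so `M ^ (2k+1) = M ^ (2k) * M`
has diagonal blocks `(λ² + BC)ᵏ λ` and `-(λ² + CB)ᵏ λ`; their traces cancel because
`tr (AB)ʲ = tr (BA)ʲ` for every `j`, hence `tr (c + AB)ᵏ = tr (c + BA)ᵏ` by the binomial theorem.
The matrices with `C = Bᵀ` form the image of an injective linear map `(B, λ) ↦ M`,
whose domain has dimension `q² + 1`.
-/

open Matrix

namespace Matrix

variable {n R : Type*} [Fintype n]

theorem trace_fromBlocks [AddCommMonoid R] {m : Type*} [Fintype m]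
    (A : Matrix n n R) (B : Matrix n m R) (C : Matrix m n R) (D : Matrix m m R) :
    trace (fromBlocks A B C D) = trace A + trace D := by
  simp [trace, Fintype.sum_sum_type]

variable [CommRing R] [DecidableEq n]

theorem trace_mul_pow_comm (A B : Matrix n n R) (k : ℕ) :
    trace ((A * B) ^ k) = trace ((B * A) ^ k) := by
  cases k with
  | zero => rfl
  | succ k =>
    have hsemiconj : A * (B * A) ^ k = (A * B) ^ k * A :=
      (SemiconjBy.pow_right (mul_assoc A B A).symm k).eq
    rw [pow_succ, ← mul_assoc, ← hsemiconj, mul_assoc, trace_mul_comm, mul_assoc _ B, ← pow_succ]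

theorem trace_smul_one_add_mul_pow_comm (c : R) (A B : Matrix n n R) (k : ℕ) :
    trace ((c • 1 + A * B) ^ k) = trace ((c • 1 + B * A) ^ k) := by
  have hcomm (X : Matrix n n R) : Commute (c • 1) X := (Commute.one_left X).smul_left c
  simp only [(hcomm _).add_pow, trace_sum, smul_pow, one_pow, smul_mul_assoc, one_mul,
    ← Nat.cast_comm, ← nsmul_eq_mul, trace_smul, trace_mul_pow_comm A B]

theorem fromBlocks_smul_one_neg_sq (lam : R) (B C : Matrix n n R) :
    fromBlocks (lam • 1) B C (-(lam • 1)) ^ 2 =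
      fromBlocks (lam ^ 2 • 1 + B * C) 0 0 (lam ^ 2 • 1 + C * B) := by
  simp [sq, fromBlocks_multiply, smul_smul, add_comm]

theorem trace_fromBlocks_smul_one_neg_pow_odd (lam : R) (B C : Matrix n n R) (k : ℕ) :
    trace (fromBlocks (lam • 1) B C (-(lam • 1)) ^ (2 * k + 1)) = 0 := by
  rw [pow_succ, pow_mul, fromBlocks_smul_one_neg_sq, fromBlocks_diagonal_pow,
    fromBlocks_multiply, trace_fromBlocks]
  simp [trace_smul_one_add_mul_pow_comm (lam ^ 2) B C]

end Matrix

section BryantSubspace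

variable {n K : Type*} [DecidableEq n] [Field K]

def bryantBlockMap : Matrix n n K × K →ₗ[K] Matrix (n ⊕ n) (n ⊕ n) K where
  toFun p := fromBlocks (p.2 • 1) p.1 p.1ᵀ (-(p.2 • 1))
  map_add' p p' := by simp [fromBlocks_add, add_smul, add_comm]
  map_smul' c p := by simp [fromBlocks_smul, smul_smul]

theorem bryantBlockMap_injective [Nonempty n] :
    Function.Injective (bryantBlockMap (n := n) (K := K)) := by
  rintro ⟨m, lam⟩ ⟨m', lam'⟩ h
  obtain ⟨hlam, hm, -, -⟩ := fromBlocks_inj.mp h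
  have i : n := Classical.arbitrary n
  exact Prod.ext hm (by simpa using congrFun₂ hlam i i)

theorem finrank_span_bryantBlocks [Fintype n] [Nonempty n] :
    Module.finrank K (Submodule.span K
      {M : Matrix (n ⊕ n) (n ⊕ n) K | ∃ (m : Matrix n n K) (lam : K),
        M = fromBlocks (lam • 1) m mᵀ (-(lam • 1))}) = Fintype.card n ^ 2 + 1 := by
  have hset : {M : Matrix (n ⊕ n) (n ⊕ n) K | ∃ (m : Matrix n n K) (lam : K),
      M = fromBlocks (lam • 1) m mᵀ (-(lam • 1))} = Set.range bryantBlockMap := by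
    ext M
    exact ⟨fun ⟨m, lam, h⟩ => ⟨(m, lam), h.symm⟩, fun ⟨(m, lam), h⟩ => ⟨m, lam, h.symm⟩⟩
  rw [hset, ← LinearMap.coe_range, Submodule.span_eq,
    LinearMap.finrank_range_of_inj bryantBlockMap_injective, Module.finrank_prod, Module.finrank_matrix]
  simp [sq]

end BryantSubspace

/-- Bryant's construction: for any `q×q` real matrix `m` and `λ ∈ ℝ`,
the block matrix `[[λI, m], [mᵀ, −λI]]` is austere, and the space of all such matrices
is an austere subspace of dimension `q² + 1`. -/
theorem bryant_lambda_block_construction_austere (q : ℕ) (hq : 1 ≤ q) :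
    (∀ (m : Matrix (Fin q) (Fin q) ℝ) (lam : ℝ),
      ∀ k : ℕ, Matrix.trace
        ((Matrix.fromBlocks (lam • (1 : Matrix (Fin q) (Fin q) ℝ)) m mᵀ
          (-(lam • (1 : Matrix (Fin q) (Fin q) ℝ)))) ^ (2 * k + 1)) = 0) ∧
    Module.finrank ℝ (Submodule.span ℝ
      {M : Matrix (Fin q ⊕ Fin q) (Fin q ⊕ Fin q) ℝ |
        ∃ (m : Matrix (Fin q) (Fin q) ℝ) (lam : ℝ),
          M = Matrix.fromBlocks (lam • (1 : Matrix (Fin q) (Fin q) ℝ)) m mᵀ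
            (-(lam • (1 : Matrix (Fin q) (Fin q) ℝ)))}) = q ^ 2 + 1 := by
  have : Nonempty (Fin q) := ⟨⟨0, hq⟩⟩
  exact ⟨fun m lam k => trace_fromBlocks_smul_one_neg_pow_odd lam m mᵀ k,
    by simpa using finrank_span_bryantBlocks (n := Fin q) (K := ℝ)⟩
end
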